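/- arXiv:1901.01127 — 6 statements merged into one kernel-verified Lean document; each statement's English description precedes it below -/
import Mathlib

section
/- Let (a_n) be a real sequence with m = liminf a_n and M = limsup a_n, where m, M ∈ ℝ and m < M. Then there exists a bijection p : ℕ → ℕ such that the sequence of arithmetic means of (a_{p(n)}), namely n ↦ (a_{p(1)} + ⋯ + a_{p(n)})/n, does not converge to any point of ℝ̄. -/
/-!
Infinitely many terms lie below `m + δ` and infinitely many above `M - δ`. Build the
rearrangement in stages: stage `k` first places the index `k` if it is still unused (so that
every index is used eventually) and then appends so many fresh low terms (for even `k`) or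
fresh high terms (for odd `k`) that the running mean drops below `m + 2δ`, resp. rises above
`M - 2δ`. This is possible because a long enough block of terms `< m + δ` swamps any finite
prefix. The means then oscillate between the two levels and converge to nothing in `ℝ̄`.
-/

open Filter Topology

/-- Arithmetic mean of the first `n` terms of a real sequence. -/
noncomputable def avgSeq (a : ℕ → ℝ) (n : ℕ) : ℝ := (∑ i ∈ Finset.range n, a i) / n

/-- `a` tends to `α ∈ ℝ̄` in average: the sequence of arithmetic means tends to `α`. -/
def avgTendsTo (a : ℕ → ℝ) (α : EReal) : Prop :=
  Tendsto (fun n => ((avgSeq a n : ℝ) : EReal)) atTop (𝓝 α)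

/-- The set of points of `ℝ̄` accessible in average by rearrangement of `a`. -/
def AAR (a : ℕ → ℝ) : Set EReal :=
  {α | ∃ p : ℕ → ℕ, Function.Bijective p ∧ avgTendsTo (fun n => a (p n)) α}

/-- The interleaving `(b_n)||(c_n)` (0-indexed: `a (2n) = b n`, `a (2n+1) = c n`). -/
noncomputable def interleave (b c : ℕ → ℝ) : ℕ → ℝ :=
  fun n => if n % 2 = 0 then b (n / 2) else c (n / 2)

section ExtensionChain

variable (Q : ℕ → List ℕ → Prop)
  (hQ : ∀ k (l : List ℕ), l.Nodup → ∃ t, (l ++ t).Nodup ∧ Q k (l ++ t))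

def appendIfAbsent (k : ℕ) (l : {l : List ℕ // l.Nodup}) : {l : List ℕ // l.Nodup} :=
  if hk : k ∈ l.1 then l else ⟨l.1 ++ [k], List.concat_eq_append ▸ l.2.concat hk⟩

lemma prefix_appendIfAbsent (k : ℕ) (l : {l : List ℕ // l.Nodup}) :
    l.1 <+: (appendIfAbsent k l).1 := by
  unfold appendIfAbsent
  split_ifs
  exacts [List.prefix_refl _, List.prefix_append _ _]

lemma mem_appendIfAbsent (k : ℕ) (l : {l : List ℕ // l.Nodup}) : k ∈ (appendIfAbsent k l).1 := by
  unfold appendIfAbsent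
  split_ifs with hk
  exacts [hk, List.mem_concat_self]

noncomputable def extensionChain : ℕ → {l : List ℕ // l.Nodup}
  | 0 => ⟨[], List.nodup_nil⟩
  | k + 1 =>
    let l := appendIfAbsent k (extensionChain k)
    ⟨l.1 ++ (hQ k l.1 l.2).choose, (hQ k l.1 l.2).choose_spec.1⟩

lemma prefix_extensionChain_succ (k : ℕ) :
    (extensionChain Q hQ k).1 <+: (extensionChain Q hQ (k + 1)).1 :=
  (prefix_appendIfAbsent k _).trans (List.prefix_append _ _)

lemma mem_extensionChain_succ (k : ℕ) : k ∈ (extensionChain Q hQ (k + 1)).1 :=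
  List.mem_append_left _ (mem_appendIfAbsent k _)

lemma extensionChain_succ_spec (k : ℕ) : Q k (extensionChain Q hQ (k + 1)).1 :=
  (hQ k _ (appendIfAbsent k _).2).choose_spec.2

lemma prefix_extensionChain_of_le {k k' : ℕ} (h : k ≤ k') :
    (extensionChain Q hQ k).1 <+: (extensionChain Q hQ k').1 := by
  induction h with
  | refl => exact List.prefix_refl _
  | step _ ih => exact ih.trans (prefix_extensionChain_succ Q hQ _)

lemma mem_extensionChain {n k : ℕ} (h : n < k) : n ∈ (extensionChain Q hQ k).1 :=
  (prefix_extensionChain_of_le Q hQ h).subset (mem_extensionChain_succ Q hQ n)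

lemma le_length_extensionChain (k : ℕ) : k ≤ (extensionChain Q hQ k).1.length := by
  simpa using (List.nodup_range.subperm fun n hn =>
    mem_extensionChain Q hQ (List.mem_range.1 hn)).length_le

/-- Stage `n + 1` has more than `n` entries, so the default `0` of `getD` is never used. -/
noncomputable def extensionChainLimit (n : ℕ) : ℕ := (extensionChain Q hQ (n + 1)).1.getD n 0

lemma map_range_extensionChainLimit (k : ℕ) :
    (List.range (extensionChain Q hQ k).1.length).map (extensionChainLimit Q hQ) =
      (extensionChain Q hQ k).1 := by
  refine List.ext_getElem (by simp) fun i hi hik => ?_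
  have hi' : i < (extensionChain Q hQ (i + 1)).1.length :=
    le_length_extensionChain Q hQ (i + 1)
  rw [List.getElem_map, List.getElem_range, extensionChainLimit, List.getD_eq_getElem _ _ hi']
  rcases le_total k (i + 1) with hle | hle
  · exact ((prefix_extensionChain_of_le Q hQ hle).getElem hik).symm
  · exact (prefix_extensionChain_of_le Q hQ hle).getElem hi'

end ExtensionChain

theorem exists_bijective_of_forall_nodup_extend (Q : ℕ → List ℕ → Prop)
    (hQ : ∀ k (l : List ℕ), l.Nodup → ∃ t, (l ++ t).Nodup ∧ Q k (l ++ t)) :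
    ∃ p : ℕ → ℕ, p.Bijective ∧ ∀ k, ∃ n ≥ k, Q k ((List.range n).map p) := by
  set p := extensionChainLimit Q hQ
  have hchain := map_range_extensionChainLimit Q hQ
  refine ⟨p, ⟨fun i j hij => ?_, fun n => ?_⟩, fun k => ?_⟩
  · obtain ⟨k, hik, hjk⟩ : ∃ k, i < k ∧ j < k := ⟨max i j + 1, by omega, by omega⟩
    have hnodup := (extensionChain Q hQ k).2
    rw [← hchain, List.nodup_map_iff_inj_on List.nodup_range] at hnodup
    exact hnodup i (by simpa using (le_length_extensionChain Q hQ k).trans_lt' hik) j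
      (by simpa using (le_length_extensionChain Q hQ k).trans_lt' hjk) hij
  · have hn := mem_extensionChain Q hQ n.lt_succ_self
    rw [← hchain] at hn
    obtain ⟨i, -, hi⟩ := List.mem_map.1 hn
    exact ⟨i, hi⟩
  · refine ⟨_, (le_length_extensionChain Q hQ (k + 1)).trans' k.le_succ, ?_⟩
    rw [hchain]
    exact extensionChain_succ_spec Q hQ k

theorem exists_nodup_append_sum_lt (a : ℕ → ℝ) {v c : ℝ} (hv : {n | a n < v}.Infinite)
    (hvc : v < c) {l : List ℕ} (hl : l.Nodup) :
    ∃ t, (l ++ t).Nodup ∧ ((l ++ t).map a).sum < c * (l ++ t).length := by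
  obtain ⟨j, hj⟩ := exists_nat_gt (((l.map a).sum - c * l.length) / (c - v))
  rw [div_lt_iff₀ (sub_pos.2 hvc)] at hj
  obtain ⟨T, hTv, hTj⟩ := (hv.sdiff l.finite_toSet).exists_subset_card_eq j
  refine ⟨T.toList, List.nodup_append.2 ⟨hl, T.nodup_toList, ?_⟩, ?_⟩
  · rintro x hx y hy rfl
    exact (hTv (Finset.mem_toList.1 hy)).2 hx
  have hT : ∑ x ∈ T, a x ≤ j * v := by
    simpa [hTj] using T.sum_le_card_nsmul a v fun x hx => (hTv hx).1.le
  rw [List.map_append, List.sum_append, Finset.sum_map_toList, List.length_append,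
    Finset.length_toList, hTj]
  push_cast
  linarith

theorem exists_nodup_append_lt_sum (a : ℕ → ℝ) {w d : ℝ} (hw : {n | w < a n}.Infinite)
    (hdw : d < w) {l : List ℕ} (hl : l.Nodup) :
    ∃ t, (l ++ t).Nodup ∧ d * (l ++ t).length < ((l ++ t).map a).sum := by
  have hsum_neg (l : List ℕ) : (l.map fun n => -a n).sum = -(l.map a).sum := by
    induction l <;> simp [*, add_comm]
  obtain ⟨t, hnodup, hsum⟩ :=
    exists_nodup_append_sum_lt (fun n => -a n) (v := -w) (c := -d) (by simpa using hw)
      (neg_lt_neg hdw) hl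
  rw [hsum_neg] at hsum
  exact ⟨t, hnodup, by linarith⟩

lemma avgSeq_comp_eq_list_sum_div (a : ℕ → ℝ) (p : ℕ → ℕ) (n : ℕ) :
    avgSeq (fun i => a (p i)) n = (((List.range n).map p).map a).sum / n := by
  rw [avgSeq, List.map_map, ← List.sum_toFinset _ List.nodup_range, List.toFinset_range]
  rfl

lemma avgSeq_comp_lt_of_sum_lt {a : ℕ → ℝ} {p : ℕ → ℕ} {n : ℕ} {c : ℝ}
    (h : (((List.range n).map p).map a).sum < c * ((List.range n).map p).length) :
    avgSeq (fun i => a (p i)) n < c := by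
  rw [List.length_map, List.length_range] at h
  rcases n.eq_zero_or_pos with rfl | hn
  · simp at h
  rw [avgSeq_comp_eq_list_sum_div, div_lt_iff₀ (by exact_mod_cast hn)]
  exact h

lemma lt_avgSeq_comp_of_lt_sum {a : ℕ → ℝ} {p : ℕ → ℕ} {n : ℕ} {d : ℝ}
    (h : d * ((List.range n).map p).length < (((List.range n).map p).map a).sum) :
    d < avgSeq (fun i => a (p i)) n := by
  rw [List.length_map, List.length_range] at h
  rcases n.eq_zero_or_pos with rfl | hn
  · simp at h
  rw [avgSeq_comp_eq_list_sum_div, lt_div_iff₀ (by exact_mod_cast hn)]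
  exact h

theorem exists_bijective_frequently_avgSeq_lt_and_gt (a : ℕ → ℝ) {v c d w : ℝ}
    (hv : {n | a n < v}.Infinite) (hvc : v < c) (hw : {n | w < a n}.Infinite) (hdw : d < w) :
    ∃ p : ℕ → ℕ, p.Bijective ∧ (∃ᶠ n in atTop, avgSeq (fun i => a (p i)) n < c) ∧
      ∃ᶠ n in atTop, d < avgSeq (fun i => a (p i)) n := by
  let Q (k : ℕ) (l : List ℕ) : Prop :=
    if Even k then (l.map a).sum < c * l.length else d * l.length < (l.map a).sum
  obtain ⟨p, hp, hQ⟩ := exists_bijective_of_forall_nodup_extend Q fun k l hl => by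
    by_cases hk : Even k
    · simpa [Q, hk] using exists_nodup_append_sum_lt a hv hvc hl
    · simpa [Q, hk] using exists_nodup_append_lt_sum a hw hdw hl
  refine ⟨p, hp, frequently_atTop.2 fun N => ?_, frequently_atTop.2 fun N => ?_⟩
  · obtain ⟨n, hn, hQn⟩ := hQ (2 * N)
    simp only [Q, even_two_mul, if_true] at hQn
    exact ⟨n, by omega, avgSeq_comp_lt_of_sum_lt hQn⟩
  · obtain ⟨n, hn, hQn⟩ := hQ (2 * N + 1)
    simp only [Q, Nat.not_even_two_mul_add_one, if_false] at hQn
    exact ⟨n, by omega, lt_avgSeq_comp_of_lt_sum hQn⟩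

theorem not_tendsto_of_frequently_le_of_frequently_ge {α β : Type*} [TopologicalSpace β]
    [Preorder β] [ClosedIicTopology β] [ClosedIciTopology β] {f : α → β} {l : Filter α}
    {c d : β} (hcd : c < d) (hc : ∃ᶠ x in l, f x ≤ c) (hd : ∃ᶠ x in l, d ≤ f x) (b : β) :
    ¬Tendsto f l (𝓝 b) := fun hf =>
  (hcd.trans_le ((isClosed_Ici.mem_of_frequently_of_tendsto hd hf).trans
    (isClosed_Iic.mem_of_frequently_of_tendsto hc hf))).false

theorem infinite_setOf_lt_of_liminf_lt {a : ℕ → ℝ} {v : ℝ}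
    (h : liminf (fun n => (a n : EReal)) atTop < v) : {n | a n < v}.Infinite :=
  Nat.frequently_atTop_iff_infinite.1 <|
    (frequently_lt_of_liminf_lt (by isBoundedDefault) h).mono fun _ => EReal.coe_lt_coe_iff.1

theorem infinite_setOf_gt_of_lt_limsup {a : ℕ → ℝ} {w : ℝ}
    (h : w < limsup (fun n => (a n : EReal)) atTop) : {n | w < a n}.Infinite :=
  Nat.frequently_atTop_iff_infinite.1 <|
    (frequently_lt_of_lt_limsup (by isBoundedDefault) h).mono fun _ => EReal.coe_lt_coe_iff.1

/-- If `m = liminf aₙ` and `M = limsup aₙ` are finite with `m < M`, then there is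
a rearrangement of `(a_n)` whose sequence of arithmetic means converges to no
point of `ℝ̄`. -/
theorem stmt5 (a : ℕ → ℝ) (m M : ℝ)
    (hm : liminf (fun n => ((a n : ℝ) : EReal)) atTop = (m : EReal))
    (hM : limsup (fun n => ((a n : ℝ) : EReal)) atTop = (M : EReal))
    (hmM : m < M) :
    ∃ p : ℕ → ℕ, Function.Bijective p ∧
      ∀ α : EReal, ¬ avgTendsTo (fun n => a (p n)) α := by
  obtain ⟨δ, hδ, hδM⟩ : ∃ δ, 0 < δ ∧ 4 * δ < M - m := ⟨(M - m) / 5, by linarith, by linarith⟩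
  have hlow : {n | a n < m + δ}.Infinite :=
    infinite_setOf_lt_of_liminf_lt (by rw [hm]; exact_mod_cast (by linarith : m < m + δ))
  have hhigh : {n | M - δ < a n}.Infinite :=
    infinite_setOf_gt_of_lt_limsup (by rw [hM]; exact_mod_cast (by linarith : M - δ < M))
  obtain ⟨p, hp, hlt, hgt⟩ := exists_bijective_frequently_avgSeq_lt_and_gt a hlow
    (c := m + 2 * δ) (by linarith) hhigh (d := M - 2 * δ) (by linarith)
  refine ⟨p, hp, not_tendsto_of_frequently_le_of_frequently_ge ?_
    (hlt.mono fun n hn => EReal.coe_le_coe hn.le) (hgt.mono fun n hn => EReal.coe_le_coe hn.le)⟩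
  exact_mod_cast (by linarith : m + 2 * δ < M - 2 * δ)
end

section
/- Let (a_n) = (b_n)||(c_n), where b_n ≡ 0 and c_n → +∞. If 1 ∈ AAR_{(a_n)}, then AAR_{(a_n)} is the extended-real closed interval [0, +∞], i.e. AAR_{(a_n)} = {α ∈ ℝ̄ : 0 ≤ α}. -/
/-!
A rearrangement of `(0)||(c)` has only finitely many negative terms, so its partial sums are
bounded below and every point accessible in average is `≥ 0`.

Conversely, up to the zero terms, a rearrangement is described by the order in which it visits
the terms of `c` and by the number `K m` of them among its first `m` terms; `K` can be any
unbounded counting function with steps `0` or `1` that pauses infinitely often. Visiting `c` in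
its natural order every other step gives mean `+∞` (Cesàro), visiting it sparsely enough gives
`0`. For `r > 0`, take the order of a rearrangement with mean `1`: its partial sums satisfy
`U (k + 1) / U k → 1`, and drawing a new term greedily whenever the partial sum stays below
`r m` makes the means converge to `r`.
-/

open Filter Topology

open Finset

lemma exists_forall_neg_le_sum_range_comp {a : ℕ → ℝ} (ha : ∀ᶠ n in atTop, 0 ≤ a n)
    {p : ℕ → ℕ} (hp : p.Injective) : ∃ B, ∀ m, -B ≤ ∑ i ∈ range m, a (p i) := by
  obtain ⟨N, hN⟩ := ha.exists_forall_of_atTop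
  refine ⟨∑ j ∈ range N, |a j|, fun m => ?_⟩
  rw [← sum_image (f := a) hp.injOn,
    ← sum_filter_add_sum_filter_not ((range m).image p) (· < N)]
  have h_small : -∑ j ∈ range N, |a j| ≤ ∑ j ∈ (range m).image p with j < N, a j :=
    neg_le.2 <| (neg_le_abs _).trans <| (abs_sum_le_sum_abs _ _).trans <|
      sum_le_sum_of_subset_of_nonneg (fun j hj => by simp [(mem_filter.1 hj).2])
        fun j _ _ => abs_nonneg _
  have h_large : 0 ≤ ∑ j ∈ (range m).image p with ¬j < N, a j :=
    sum_nonneg fun j hj => hN j (not_lt.1 (mem_filter.1 hj).2)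
  linarith

lemma tendsto_sum_range_div_atTop {w : ℕ → ℝ} (hw : Tendsto w atTop atTop) :
    Tendsto (fun k => (∑ j ∈ range k, w j) / k) atTop atTop := by
  refine tendsto_atTop.2 fun C => ?_
  obtain ⟨B, hB⟩ := exists_forall_neg_le_sum_range_comp
    (hw.eventually_ge_atTop (C + 1) |>.mono fun j hj => sub_nonneg.2 hj) Function.injective_id
  filter_upwards [eventually_ge_atTop 1, eventually_ge_atTop ⌈B⌉₊] with k hk hkB
  have hkpos : (0 : ℝ) < k := by exact_mod_cast hk
  have hBk : B ≤ k := (Nat.le_ceil B).trans (by exact_mod_cast hkB)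
  have := hB k
  simp only [id, sum_sub_distrib, sum_const, card_range, nsmul_eq_mul] at this
  rw [le_div_iff₀ hkpos]
  nlinarith

lemma nonneg_of_avgTendsTo {a : ℕ → ℝ} {B : ℝ} (hB : ∀ m, -B ≤ ∑ i ∈ range m, a i)
    {α : EReal} (h : avgTendsTo a α) : 0 ≤ α := by
  have h_lower : Tendsto (fun m : ℕ => ((-B / m : ℝ) : EReal)) atTop (𝓝 0) := by
    simpa using EReal.tendsto_coe.2 (tendsto_const_div_atTop_nhds_zero_nat (-B))
  refine le_of_tendsto_of_tendsto h_lower h ?_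
  filter_upwards [eventually_ge_atTop 1] with m hm
  exact EReal.coe_le_coe_iff.2 (div_le_div_of_nonneg_right (hB m) (Nat.cast_nonneg m))

lemma eventually_nonneg_interleave_zero {c : ℕ → ℝ} (hc : Tendsto c atTop atTop) :
    ∀ᶠ n in atTop, 0 ≤ interleave (fun _ => 0) c n := by
  obtain ⟨N, hN⟩ := (hc.eventually_ge_atTop 0).exists_forall_of_atTop
  filter_upwards [eventually_ge_atTop (2 * N)] with n hn
  unfold interleave
  split_ifs
  · rfl
  · exact hN _ (by omega)

lemma nonneg_of_mem_AAR {c : ℕ → ℝ} (hc : Tendsto c atTop atTop) {α : EReal}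
    (h : α ∈ AAR (interleave (fun _ => 0) c)) : 0 ≤ α := by
  obtain ⟨p, hp, hα⟩ := h
  obtain ⟨B, hB⟩ := exists_forall_neg_le_sum_range_comp (eventually_nonneg_interleave_zero hc)
    hp.injective
  exact nonneg_of_avgTendsTo hB hα

lemma sum_range_eq_sum_range_count_nth (x : ℕ → ℝ) (P : ℕ → Prop) [DecidablePred P]
    (hx : ∀ n, ¬P n → x n = 0) (m : ℕ) :
    ∑ i ∈ range m, x i = ∑ k ∈ range (Nat.count P m), x (Nat.nth P k) := by
  induction m with
  | zero => simp
  | succ n ih =>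
    rw [sum_range_succ, Nat.count_succ, ih]
    by_cases h : P n
    · rw [if_pos h, sum_range_succ, Nat.nth_count h]
    · rw [if_neg h, hx n h, add_zero, add_zero]

/-- Placing the `j`-th term with `P` at the `j`-th position with `S`, and the `j`-th term
without `P` at the `j`-th position without `S`, rearranges `x`. -/
lemma exists_bijective_sum_range_comp_eq (x : ℕ → ℝ) {P S : ℕ → Prop}
    [DecidablePred P] [DecidablePred S]
    (hP : {n | P n}.Infinite) (hPc : {n | ¬P n}.Infinite)
    (hS : {n | S n}.Infinite) (hSc : {n | ¬S n}.Infinite) (hx : ∀ n, ¬P n → x n = 0) :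
    ∃ q : ℕ → ℕ, q.Bijective ∧
      ∀ m, ∑ i ∈ range m, x (q i) = ∑ k ∈ range (Nat.count S m), x (Nat.nth P k) := by
  let q : ℕ → ℕ := fun n =>
    if S n then Nat.nth P (Nat.count S n) else Nat.nth (¬P ·) (Nat.count (¬S ·) n)
  let q' : ℕ → ℕ := fun n =>
    if P n then Nat.nth S (Nat.count P n) else Nat.nth (¬S ·) (Nat.count (¬P ·) n)
  have hq'q : Function.LeftInverse q' q := by
    intro n
    by_cases h : S n
    · simp [q, q', h, Nat.nth_mem_of_infinite hP, Nat.count_nth_of_infinite hP, Nat.nth_count]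
    · simp [q, q', h, Nat.nth_mem_of_infinite hPc, Nat.count_nth_of_infinite hPc,
        Nat.nth_count (p := (¬S ·)) h]
  have hqq' : Function.RightInverse q' q := by
    intro n
    by_cases h : P n
    · simp [q, q', h, Nat.nth_mem_of_infinite hS, Nat.count_nth_of_infinite hS, Nat.nth_count]
    · simp [q, q', h, Nat.nth_mem_of_infinite hSc, Nat.count_nth_of_infinite hSc,
        Nat.nth_count (p := (¬P ·)) h]
  refine ⟨q, Function.bijective_iff_has_inverse.2 ⟨q', hq'q, hqq'⟩, fun m => ?_⟩
  have hxq : ∀ n, ¬S n → x (q n) = 0 := fun n h => by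
    simpa [q, h] using hx _ (Nat.nth_mem_of_infinite hPc _)
  rw [sum_range_eq_sum_range_count_nth _ S hxq]
  refine sum_congr rfl fun k _ => ?_
  simp [q, Nat.nth_mem_of_infinite hS, Nat.count_nth_of_infinite hS]

/-- `K m` is the number of terms drawn from a given sequence among the first `m` terms of a
rearrangement that draws them in order, one or none at a time, and fills in with zeros. -/
structure IsSchedule (K : ℕ → ℕ) : Prop where
  zero : K 0 = 0
  succ_eq_or : ∀ m, K (m + 1) = K m ∨ K (m + 1) = K m + 1
  tendsto : Tendsto K atTop atTop
  frequently_succ_eq : ∃ᶠ m in atTop, K (m + 1) = K m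

lemma IsSchedule.count_eq {K : ℕ → ℕ} (hK : IsSchedule K) (m : ℕ) :
    Nat.count (fun n => K (n + 1) = K n + 1) m = K m := by
  induction m with
  | zero => exact hK.zero.symm
  | succ n ih =>
    rw [Nat.count_succ, ih]
    rcases hK.succ_eq_or n with h | h <;> simp [h]

lemma IsSchedule.infinite_setOf_succ {K : ℕ → ℕ} (hK : IsSchedule K) :
    {n | K (n + 1) = K n + 1}.Infinite := by
  intro hfin
  obtain ⟨m, hm⟩ := (hK.tendsto.eventually_gt_atTop hfin.toFinset.card).exists
  exact (Nat.count_le_card hfin m).not_gt (hK.count_eq m ▸ hm)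

lemma IsSchedule.infinite_setOf_not_succ {K : ℕ → ℕ} (hK : IsSchedule K) :
    {n | ¬K (n + 1) = K n + 1}.Infinite :=
  Nat.frequently_atTop_iff_infinite.1 (hK.frequently_succ_eq.mono fun m h => by omega)

lemma exists_bijective_sum_range_comp_eq_of_isSchedule (x : ℕ → ℝ) {P : ℕ → Prop}
    [DecidablePred P] (hP : {n | P n}.Infinite) (hPc : {n | ¬P n}.Infinite)
    (hx : ∀ n, ¬P n → x n = 0) {K : ℕ → ℕ} (hK : IsSchedule K) :
    ∃ q : ℕ → ℕ, q.Bijective ∧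
      ∀ m, ∑ i ∈ range m, x (q i) = ∑ k ∈ range (K m), x (Nat.nth P k) := by
  obtain ⟨q, hq, hsum⟩ := exists_bijective_sum_range_comp_eq x hP hPc
    hK.infinite_setOf_succ hK.infinite_setOf_not_succ hx
  exact ⟨q, hq, fun m => by rw [hsum, hK.count_eq]⟩

lemma isSchedule_half : IsSchedule fun m => (m + 1) / 2 :=
  ⟨rfl, fun m => by omega,
    (Nat.tendsto_div_const_atTop two_ne_zero).comp (tendsto_add_atTop_nat 1),
    frequently_atTop.2 fun a => ⟨2 * a + 1, by omega, by omega⟩⟩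

lemma tendsto_sum_range_half_div_atTop {w : ℕ → ℝ} (hw : Tendsto w atTop atTop) :
    Tendsto (fun m => (∑ j ∈ range ((m + 1) / 2), w j) / m) atTop atTop := by
  have hcesaro :=
    ((tendsto_sum_range_div_atTop hw).comp isSchedule_half.tendsto).atTop_div_const two_pos
  refine tendsto_atTop_mono' atTop ?_ hcesaro
  filter_upwards [hcesaro.eventually_ge_atTop 0, eventually_gt_atTop 0] with m hU hm
  have hK : (0 : ℝ) < ((m + 1) / 2 : ℕ) := by exact_mod_cast (by omega : 0 < (m + 1) / 2)
  have hmK : (m : ℝ) ≤ 2 * ((m + 1) / 2 : ℕ) := by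
    exact_mod_cast (by omega : m ≤ 2 * ((m + 1) / 2))
  simp only [Function.comp_apply] at hU ⊢
  rw [le_div_iff₀ two_pos, zero_mul, le_div_iff₀ hK, zero_mul] at hU
  rw [div_div]
  exact div_le_div_of_nonneg_left hU (by exact_mod_cast hm) (by linarith)

def greedySchedule (cond : ℕ → ℕ → Prop) [DecidableRel cond] : ℕ → ℕ
  | 0 => 0
  | m + 1 => greedySchedule cond m + if cond m (greedySchedule cond m) then 1 else 0

section greedySchedule

variable {cond : ℕ → ℕ → Prop} [DecidableRel cond]

lemma greedySchedule_succ_of_cond {m : ℕ} (h : cond m (greedySchedule cond m)) :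
    greedySchedule cond (m + 1) = greedySchedule cond m + 1 := by
  simp [greedySchedule, h]

lemma greedySchedule_succ_of_not_cond {m : ℕ} (h : ¬cond m (greedySchedule cond m)) :
    greedySchedule cond (m + 1) = greedySchedule cond m := by
  simp [greedySchedule, h]

lemma greedySchedule_monotone : Monotone (greedySchedule cond) :=
  monotone_nat_of_le_succ fun m => by
    by_cases h : cond m (greedySchedule cond m)
    · simp [greedySchedule_succ_of_cond h]
    · simp [greedySchedule_succ_of_not_cond h]

lemma exists_lt_cond_of_greedySchedule_eq_succ {m k : ℕ} (h : greedySchedule cond m = k + 1) :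
    ∃ m' < m, cond m' k := by
  induction m with
  | zero => simp [greedySchedule] at h
  | succ m ih =>
    by_cases hm : cond m (greedySchedule cond m)
    · rw [greedySchedule_succ_of_cond hm, Nat.add_right_cancel_iff] at h
      exact ⟨m, m.lt_succ_self, h ▸ hm⟩
    · obtain ⟨m', hm', hc⟩ := ih (greedySchedule_succ_of_not_cond hm ▸ h)
      exact ⟨m', hm'.trans m.lt_succ_self, hc⟩

lemma tendsto_greedySchedule (hcond : ∀ k, ∀ᶠ m in atTop, cond m k) :
    Tendsto (greedySchedule cond) atTop atTop := by
  refine tendsto_atTop_atTop_of_monotone greedySchedule_monotone fun k => ?_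
  induction k with
  | zero => exact ⟨0, le_rfl⟩
  | succ k ih =>
    obtain ⟨a, ha⟩ := ih
    obtain ⟨m, ham, hm⟩ := ((eventually_ge_atTop a).and (hcond k)).exists
    refine ⟨m + 1, ?_⟩
    rcases (ha.trans (greedySchedule_monotone ham)).eq_or_lt with heq | hlt
    · rw [greedySchedule_succ_of_cond (heq ▸ hm), ← heq]
    · exact hlt.trans_le (greedySchedule_monotone m.le_succ)

lemma le_greedySchedule_add {M : ℕ} (h : ∀ m ≥ M, cond m (greedySchedule cond m)) (m : ℕ) :
    m ≤ greedySchedule cond m + M := by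
  induction m with
  | zero => omega
  | succ m ih =>
    rcases le_or_gt M m with hm | hm
    · rw [greedySchedule_succ_of_cond (h m hm)]; omega
    · omega

lemma isSchedule_greedySchedule (hcond : ∀ k, ∀ᶠ m in atTop, cond m k)
    (hrej : ∀ M, ∀ᶠ m in atTop, ∀ k, m ≤ k + M → ¬cond m k) :
    IsSchedule (greedySchedule cond) := by
  refine ⟨rfl, fun m => ?_, tendsto_greedySchedule hcond, ?_⟩
  · by_cases h : cond m (greedySchedule cond m)
    · exact .inr (greedySchedule_succ_of_cond h)
    · exact .inl (greedySchedule_succ_of_not_cond h)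
  · refine Frequently.mono ?_ fun m => greedySchedule_succ_of_not_cond
    by_contra hev
    obtain ⟨M, hM⟩ := (not_frequently.1 hev).exists_forall_of_atTop
    simp only [not_not] at hM
    obtain ⟨m, hmM, hm⟩ := ((eventually_ge_atTop M).and (hrej M)).exists
    exact hm _ (le_greedySchedule_add hM m) (hM m hmM)

end greedySchedule

/-- Drawing the `(k+1)`-st term only from step `(k+1) (|U (k+1)| + 2)` on gives
`|U (K m)| K m ≤ m`; the `+ 2` keeps `2 K m < m`, so the schedule pauses infinitely often. -/
lemma exists_isSchedule_tendsto_zero (U : ℕ → ℝ) :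
    ∃ K, IsSchedule K ∧ Tendsto (fun m => U (K m) / m) atTop (𝓝 0) := by
  let cond : ℕ → ℕ → Prop := fun m k => ((k : ℝ) + 1) * (|U (k + 1)| + 2) ≤ m
  have hcond : ∀ k, ∀ᶠ m in atTop, cond m k := fun k =>
    tendsto_natCast_atTop_atTop.eventually_ge_atTop _
  have hrej : ∀ M, ∀ᶠ m in atTop, ∀ k, m ≤ k + M → ¬cond m k := fun M => by
    filter_upwards [eventually_ge_atTop (2 * M)] with m hm k hk hc
    have hmk : (m : ℝ) + 2 ≤ 2 * ((k : ℝ) + 1) := by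
      exact_mod_cast (by omega : m + 2 ≤ 2 * (k + 1))
    have : 2 * ((k : ℝ) + 1) ≤ ((k : ℝ) + 1) * (|U (k + 1)| + 2) := by
      nlinarith [abs_nonneg (U (k + 1))]
    simp only [cond] at hc
    linarith
  let K := greedySchedule cond
  have hKtop : Tendsto K atTop atTop := tendsto_greedySchedule hcond
  have hbound : ∀ m, |U (K m)| * K m ≤ m := fun m => by
    rcases hKm : K m with _ | k
    · simp
    obtain ⟨m', hm', hc⟩ := exists_lt_cond_of_greedySchedule_eq_succ hKm
    have : (m' : ℝ) ≤ m := by exact_mod_cast hm'.le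
    simp only [cond] at hc
    push_cast
    nlinarith [abs_nonneg (U (k + 1))]
  refine ⟨K, isSchedule_greedySchedule hcond hrej, squeeze_zero_norm' ?_
    (tendsto_inv_atTop_zero.comp (tendsto_natCast_atTop_atTop.comp hKtop))⟩
  filter_upwards [eventually_gt_atTop 0, hKtop.eventually_gt_atTop 0] with m hm hKm
  have hm' : (0 : ℝ) < m := by exact_mod_cast hm
  have hKm' : (0 : ℝ) < K m := by exact_mod_cast hKm
  simp only [Function.comp_apply]
  rw [Real.norm_eq_abs, abs_div, Nat.abs_cast, div_le_iff₀ hm', inv_mul_eq_div,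
    le_div_iff₀ hKm']
  exact hbound m

noncomputable def thresholdSchedule (w : ℕ → ℝ) (r : ℝ) : ℕ → ℕ :=
  greedySchedule fun m k => ∑ j ∈ range (k + 1), w j ≤ r * (m + 1)

section thresholdSchedule

variable {w : ℕ → ℝ} {r : ℝ}

lemma sum_range_thresholdSchedule_le (hr : 0 ≤ r) (m : ℕ) :
    ∑ j ∈ range (thresholdSchedule w r m), w j ≤ r * m := by
  rcases hK : thresholdSchedule w r m with _ | k
  · simpa using mul_nonneg hr (Nat.cast_nonneg m)
  obtain ⟨m', hm', hc⟩ := exists_lt_cond_of_greedySchedule_eq_succ hK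
  have : (m' : ℝ) + 1 ≤ m := by exact_mod_cast hm'
  exact hc.trans (by gcongr)

/-- Raising the terms below `r` to `r` makes every accepted step gain at least `r`. -/
lemma mul_le_sum_range_thresholdSchedule_succ_max (hr : 0 ≤ r) (m : ℕ) :
    r * m ≤ ∑ j ∈ range (thresholdSchedule w r m + 1), max (w j) r := by
  induction m with
  | zero => simpa [thresholdSchedule, greedySchedule] using le_max_of_le_right hr
  | succ m ih =>
    by_cases hc : ∑ j ∈ range (thresholdSchedule w r m + 1), w j ≤ r * (m + 1)
    · rw [thresholdSchedule, greedySchedule_succ_of_cond hc, ← thresholdSchedule,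
        sum_range_succ _ (_ + 1)]
      push_cast
      linarith [le_max_right (w (thresholdSchedule w r m + 1)) r]
    · rw [thresholdSchedule, greedySchedule_succ_of_not_cond hc, ← thresholdSchedule]
      have : ∑ j ∈ range (thresholdSchedule w r m + 1), w j ≤
          ∑ j ∈ range (thresholdSchedule w r m + 1), max (w j) r :=
        sum_le_sum fun j _ => le_max_left _ _
      push_cast
      linarith

lemma exists_forall_mul_sub_le_sum_range_thresholdSchedule_succ (hw : ∀ᶠ j in atTop, r ≤ w j)
    (hr : 0 ≤ r) :
    ∃ E, ∀ m, r * m - E ≤ ∑ j ∈ range (thresholdSchedule w r m + 1), w j := by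
  obtain ⟨E, hE⟩ := exists_forall_neg_le_sum_range_comp (a := fun j => w j - max (w j) r)
    (hw.mono fun j hj => by simp [max_eq_left hj]) Function.injective_id
  refine ⟨E, fun m => ?_⟩
  have := hE (thresholdSchedule w r m + 1)
  simp only [id, sum_sub_distrib] at this
  linarith [mul_le_sum_range_thresholdSchedule_succ_max (w := w) hr m]

lemma isSchedule_thresholdSchedule (hw : Tendsto w atTop atTop) (hr : 0 < r) :
    IsSchedule (thresholdSchedule w r) := by
  refine isSchedule_greedySchedule (fun k => ?_) fun M => ?_
  · filter_upwards [tendsto_natCast_atTop_atTop.eventually_ge_atTop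
      ((∑ j ∈ range (k + 1), w j) / r)] with m hm
    rw [div_le_iff₀ hr] at hm
    linarith
  · obtain ⟨k₀, hk₀⟩ := ((tendsto_sum_range_div_atTop hw).eventually_ge_atTop (2 * r)
      |>.and (eventually_gt_atTop 0)).exists_forall_of_atTop
    filter_upwards [eventually_ge_atTop (2 * M + k₀)] with m hm k hk hc
    have hmk : (m : ℝ) + 1 < 2 * ((k : ℝ) + 1) := by
      exact_mod_cast (by omega : m + 1 < 2 * (k + 1))
    obtain ⟨hk₁, hk₁pos⟩ := hk₀ (k + 1) (by omega)
    rw [le_div_iff₀ (by exact_mod_cast hk₁pos)] at hk₁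
    push_cast at hk₁
    nlinarith

end thresholdSchedule

lemma tendsto_div_of_le_of_mul_sub_le_succ {U : ℕ → ℝ} {K : ℕ → ℕ}
    (hK : Tendsto K atTop atTop) (hU : Tendsto (fun k => U (k + 1) / U k) atTop (𝓝 1))
    (hpos : ∀ᶠ k in atTop, 0 < U k) {r E : ℝ} (hle : ∀ m, U (K m) ≤ r * m)
    (hge : ∀ m, r * m - E ≤ U (K m + 1)) :
    Tendsto (fun m => U (K m) / m) atTop (𝓝 r) := by
  have hbelow : Tendsto (fun m : ℕ => (r - E / m) / (U (K m + 1) / U (K m))) atTop (𝓝 r) := by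
    have h := ((tendsto_const_nhds (x := r)).sub (tendsto_const_div_atTop_nhds_zero_nat E)).div
      (hU.comp hK) one_ne_zero
    rwa [sub_zero, div_one] at h
  refine tendsto_of_tendsto_of_tendsto_of_le_of_le' hbelow tendsto_const_nhds ?_ ?_
  · filter_upwards [hK.eventually (hpos.and (tendsto_add_atTop_nat 1 |>.eventually hpos)),
      eventually_gt_atTop 0] with m ⟨hUK, hUK1⟩ hm
    have hm' : (0 : ℝ) < m := by exact_mod_cast hm
    have hratio : U (K m) / m * (U (K m + 1) / U (K m)) = U (K m + 1) / m := by
      field_simp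
    rw [div_le_iff₀ (div_pos hUK1 hUK), hratio, le_div_iff₀ hm', sub_mul,
      div_mul_cancel₀ _ hm'.ne']
    linarith [hge m]
  · filter_upwards [eventually_gt_atTop 0] with m hm
    exact (div_le_iff₀ (by exact_mod_cast hm)).2 (hle m)

lemma exists_isSchedule_tendsto_of_pos {w : ℕ → ℝ} (hw : Tendsto w atTop atTop)
    (hU : Tendsto (fun k => (∑ j ∈ range (k + 1), w j) / ∑ j ∈ range k, w j) atTop (𝓝 1))
    {r : ℝ} (hr : 0 < r) :
    ∃ K, IsSchedule K ∧ Tendsto (fun m => (∑ j ∈ range (K m), w j) / m) atTop (𝓝 r) := by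
  have hpos : ∀ᶠ k in atTop, 0 < ∑ j ∈ range k, w j := by
    filter_upwards [(tendsto_sum_range_div_atTop hw).eventually_gt_atTop 0,
      eventually_gt_atTop 0] with k hk hk0
    exact (div_pos_iff_of_pos_right (by exact_mod_cast hk0)).1 hk
  obtain ⟨E, hE⟩ := exists_forall_mul_sub_le_sum_range_thresholdSchedule_succ
    (hw.eventually_ge_atTop r) hr.le
  exact ⟨thresholdSchedule w r, isSchedule_thresholdSchedule hw hr,
    tendsto_div_of_le_of_mul_sub_le_succ (U := fun k => ∑ j ∈ range k, w j)
      (isSchedule_thresholdSchedule hw hr).tendsto hU hpos (sum_range_thresholdSchedule_le hr.le)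
      hE⟩

lemma tendsto_succ_div_self_of_tendsto_div_one {T : ℕ → ℝ}
    (h : Tendsto (fun n => T n / n) atTop (𝓝 1)) :
    Tendsto (fun n => T (n + 1) / T n) atTop (𝓝 1) := by
  have hsucc : Tendsto (fun n : ℕ => T (n + 1) / (n + 1 : ℕ)) atTop (𝓝 1) :=
    h.comp (tendsto_add_atTop_nat 1)
  have hgrowth : Tendsto (fun n : ℕ => 1 + 1 / (n : ℝ)) atTop (𝓝 1) := by
    simpa using (tendsto_const_div_atTop_nhds_zero_nat (1 : ℝ)).const_add (1 : ℝ)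
  have := (hsucc.mul hgrowth).div h one_ne_zero
  rw [mul_one, div_one] at this
  refine this.congr' ?_
  filter_upwards [eventually_gt_atTop 0] with n hn
  have hn' : (n : ℝ) ≠ 0 := by exact_mod_cast hn.ne'
  simp only [Pi.div_apply]
  push_cast
  rcases eq_or_ne (T n) 0 with hT | hT
  · simp [hT]
  · field_simp

section interleave

variable {c : ℕ → ℝ} {p : ℕ → ℕ}

lemma infinite_setOf_mod_two_eq (hp : p.Bijective) {i : ℕ} (hi : i < 2) :
    {n | p n % 2 = i}.Infinite :=
  Set.Infinite.preimage (f := p) (s := {n | n % 2 = i})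
    (Set.infinite_of_forall_exists_gt fun a => ⟨2 * a + i + 2, by simp; omega, by omega⟩)
    (by simp [hp.surjective.range_eq])

lemma interleave_zero_apply_of_odd {n : ℕ} (hn : n % 2 = 1) :
    interleave (fun _ => 0) c n = c (n / 2) := by
  simp [interleave, hn]

lemma interleave_zero_apply_of_not_odd {n : ℕ} (hn : ¬n % 2 = 1) :
    interleave (fun _ => 0) c n = 0 := by
  simp [interleave, Nat.mod_two_ne_one.1 hn]

/-- The terms of `c`, in the order in which the rearrangement `p` of `(0)||(c)` visits them. -/
noncomputable def termsAlong (c : ℕ → ℝ) (p : ℕ → ℕ) (k : ℕ) : ℝ :=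
  interleave (fun _ => 0) c (p (Nat.nth (fun n => p n % 2 = 1) k))

lemma tendsto_termsAlong (hc : Tendsto c atTop atTop) (hp : p.Bijective) :
    Tendsto (termsAlong c p) atTop atTop := by
  have hinf := infinite_setOf_mod_two_eq hp one_lt_two
  have hodd : ∀ k, p (Nat.nth (fun n => p n % 2 = 1) k) % 2 = 1 := Nat.nth_mem_of_infinite hinf
  have hinj : (fun k => p (Nat.nth (fun n => p n % 2 = 1) k) / 2).Injective := fun k k' h => by
    have := hodd k
    have := hodd k'
    exact (Nat.nth_strictMono hinf).injective (hp.injective (by simp only at h; omega))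
  exact (hc.comp hinj.nat_tendsto_atTop).congr fun k =>
    (interleave_zero_apply_of_odd (hodd k)).symm

lemma sum_range_eq_sum_range_count_termsAlong (n : ℕ) :
    ∑ i ∈ range n, interleave (fun _ => 0) c (p i) =
      ∑ j ∈ range (Nat.count (fun n => p n % 2 = 1) n), termsAlong c p j :=
  sum_range_eq_sum_range_count_nth _ _ (fun _ hn => interleave_zero_apply_of_not_odd hn) n

lemma tendsto_sum_termsAlong_succ_div (hp : p.Bijective)
    (h : avgTendsTo (fun n => interleave (fun _ => 0) c (p n)) 1) :
    Tendsto (fun k => (∑ j ∈ range (k + 1), termsAlong c p j) /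
      ∑ j ∈ range k, termsAlong c p j) atTop (𝓝 1) := by
  have hinf := infinite_setOf_mod_two_eq hp one_lt_two
  have hT := tendsto_succ_div_self_of_tendsto_div_one (EReal.tendsto_coe.1 h)
  refine (hT.comp (Nat.nth_strictMono hinf).tendsto_atTop).congr fun k => ?_
  simp only [Function.comp_apply, sum_range_eq_sum_range_count_termsAlong,
    Nat.count_nth_of_infinite hinf, Nat.count_nth_succ_of_infinite hinf]

lemma mem_AAR_of_isSchedule (hp : p.Bijective) {K : ℕ → ℕ} (hK : IsSchedule K) {α : EReal}
    (h : Tendsto (fun m => (((∑ j ∈ range (K m), termsAlong c p j) / m : ℝ) : EReal))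
      atTop (𝓝 α)) :
    α ∈ AAR (interleave (fun _ => 0) c) := by
  obtain ⟨q, hq, hsum⟩ := exists_bijective_sum_range_comp_eq_of_isSchedule
    (fun n => interleave (fun _ => 0) c (p n)) (infinite_setOf_mod_two_eq hp one_lt_two)
    (by simpa using infinite_setOf_mod_two_eq hp two_pos)
    (fun n hn => interleave_zero_apply_of_not_odd hn) hK
  exact ⟨p ∘ q, hp.comp hq,
    h.congr fun m => by simp only [avgSeq, Function.comp_apply, hsum]; rfl⟩

lemma top_mem_AAR (hc : Tendsto c atTop atTop) : ⊤ ∈ AAR (interleave (fun _ => 0) c) :=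
  mem_AAR_of_isSchedule Function.bijective_id isSchedule_half
    (EReal.tendsto_coe_atTop.comp
      (tendsto_sum_range_half_div_atTop (tendsto_termsAlong hc Function.bijective_id)))

lemma zero_mem_AAR : 0 ∈ AAR (interleave (fun _ => 0) c) := by
  obtain ⟨K, hK, hlim⟩ := exists_isSchedule_tendsto_zero
    fun k => ∑ j ∈ range k, termsAlong c id j
  exact mem_AAR_of_isSchedule Function.bijective_id hK (by simpa using EReal.tendsto_coe.2 hlim)

lemma coe_mem_AAR_of_pos (hc : Tendsto c atTop atTop)
    (h1 : (1 : EReal) ∈ AAR (interleave (fun _ => 0) c)) {r : ℝ} (hr : 0 < r) :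
    (r : EReal) ∈ AAR (interleave (fun _ => 0) c) := by
  obtain ⟨p, hp, hp1⟩ := h1
  obtain ⟨K, hK, hlim⟩ := exists_isSchedule_tendsto_of_pos (tendsto_termsAlong hc hp)
    (tendsto_sum_termsAlong_succ_div hp hp1) hr
  exact mem_AAR_of_isSchedule hp hK (EReal.tendsto_coe.2 hlim)

end interleave

/-- For `(a_n) = (0)||(c_n)` with `c_n → +∞`: if `1 ∈ AAR_{(a_n)}`, then
`AAR_{(a_n)}` is the extended-real interval `[0, +∞]`. -/
theorem stmt10 (c : ℕ → ℝ) (htop : Tendsto c atTop atTop)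
    (h1 : (1 : EReal) ∈ AAR (interleave (fun _ => 0) c)) :
    AAR (interleave (fun _ => 0) c) = {α : EReal | 0 ≤ α} := by
  ext α
  refine ⟨nonneg_of_mem_AAR htop, fun hα => ?_⟩
  induction α using EReal.rec with
  | bot => simp at hα
  | coe r =>
    rcases (EReal.coe_nonneg.1 hα).eq_or_lt with rfl | hr
    · exact zero_mem_AAR
    · exact coe_mem_AAR_of_pos htop h1 hr
  | top => exact top_mem_AAR htop
end

section
/- Let k ≥ 1 be a natural number and let (a_n) = (b_n)||(c_n), where b_n ≡ 0 and c_n = n^k. Then AAR_{(a_n)} is the extended-real closed interval [0, +∞], i.e. AAR_{(a_n)} = {α ∈ ℝ̄ : 0 ≤ α}. -/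
open Filter Topology

/-!
Put the terms `c m` at positions `g m`, with `g` strictly increasing and leaving infinitely many
gaps, and the zeros everywhere else. If `g (m - 1) < n ≤ g m`, the mean of the first `n` terms is
`S m / n` with `S m = c 0 + ⋯ + c (m - 1)`, so the means tend to `α` as soon as `S m / g m` and
`S (m + 1) / (g m + 1)` do. Taking `g m ≈ 2 m + S (m + 1) / α` works for `0 < α < ∞`, because
`S m / m → ∞` makes the `2 m` negligible and `c m / S m → 0` makes `S m ~ S (m + 1)`; `g m = 2 m + 1`
gives `+∞` and `g m ≈ m S (m + 1)` gives `0`. For `c n = (n + 1) ^ k` both growth conditions follow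
from `m (m + 1) ^ k ≤ 2 ^ k S m`, which is `(a + b) ^ k ≤ 2 ^ (k - 1) (a ^ k + b ^ k)` summed over
`a = j + 1`, `b = m - j`.
-/

open Finset

section InterleaveIndex

variable (p : ℕ → Prop) [DecidablePred p]

def interleaveIndex (i : ℕ) : ℕ :=
  if p i then 2 * Nat.count p i + 1 else 2 * Nat.count (fun j => ¬p j) i

lemma interleave_interleaveIndex (b c : ℕ → ℝ) (i : ℕ) :
    interleave b c (interleaveIndex p i) =
      if p i then c (Nat.count p i) else b (Nat.count (fun j => ¬p j) i) := by
  unfold interleaveIndex interleave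
  split_ifs <;> first | omega | congr 1; omega

lemma interleaveIndex_bijective (hp : {i | p i}.Infinite) (hnp : {i | ¬p i}.Infinite) :
    Function.Bijective (interleaveIndex p) := by
  refine ⟨fun i j hij => ?_, fun v => ?_⟩
  · unfold interleaveIndex at hij
    split_ifs at hij with hi hj hj
    · exact Nat.count_injective hi hj (by omega)
    · omega
    · omega
    · exact Nat.count_injective (p := fun j => ¬p j) hi hj (by omega)
  · obtain ⟨t, rfl | rfl⟩ := Nat.even_or_odd' v
    · exact ⟨Nat.nth (fun j => ¬p j) t, by
        simp [interleaveIndex, Nat.nth_mem_of_infinite hnp, Nat.count_nth_of_infinite hnp]⟩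
    · exact ⟨Nat.nth p t, by
        simp [interleaveIndex, Nat.nth_mem_of_infinite hp, Nat.count_nth_of_infinite hp]⟩

lemma sum_range_ite_count {M : Type*} [AddCommMonoid M] (f : ℕ → M) (n : ℕ) :
    ∑ i ∈ range n, (if p i then f (Nat.count p i) else 0) =
      ∑ j ∈ range (Nat.count p n), f j := by
  induction n with
  | zero => simp
  | succ n ih =>
    rw [sum_range_succ, ih, Nat.count_succ]
    split_ifs <;> simp [sum_range_succ]

lemma avgSeq_interleave_zero_interleaveIndex (c : ℕ → ℝ) (n : ℕ) :
    avgSeq (fun i => interleave (fun _ => 0) c (interleaveIndex p i)) n =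
      (∑ j ∈ range (Nat.count p n), c j) / n := by
  simp only [avgSeq, interleave_interleaveIndex p, sum_range_ite_count]

variable {c : ℕ → ℝ}

lemma div_nth_count_le_avgSeq (hc : 0 ≤ c) (hp : {i | p i}.Infinite) (n : ℕ) :
    (∑ j ∈ range (Nat.count p n), c j) / Nat.nth p (Nat.count p n) ≤
      avgSeq (fun i => interleave (fun _ => 0) c (interleaveIndex p i)) n := by
  rw [avgSeq_interleave_zero_interleaveIndex]
  rcases n.eq_zero_or_pos with rfl | hn
  · simp
  exact div_le_div_of_nonneg_left (sum_nonneg fun j _ => hc j) (by exact_mod_cast hn)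
    (by exact_mod_cast Nat.le_nth_count hp n)

lemma avgSeq_le_div_nth_add_one (hc : 0 ≤ c) {m n : ℕ} (h : Nat.count p n = m + 1) :
    avgSeq (fun i => interleave (fun _ => 0) c (interleaveIndex p i)) n ≤
      (∑ j ∈ range (m + 1), c j) / (Nat.nth p m + 1) := by
  rw [avgSeq_interleave_zero_interleaveIndex, h]
  have hlt : Nat.nth p m < n := Nat.nth_lt_of_lt_count (by omega)
  exact div_le_div_of_nonneg_left (sum_nonneg fun j _ => hc j) (by positivity)
    (by exact_mod_cast hlt)

end InterleaveIndex

section Gaps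

variable {g : ℕ → ℕ} (hg : ∀ m, g m + 2 ≤ g (m + 1))
include hg

lemma strictMono_of_add_two_le : StrictMono g :=
  strictMono_nat_of_lt_succ fun m => by have := hg m; omega

lemma infinite_compl_range_of_add_two_le : {i | i ∉ Set.range g}.Infinite := by
  have hmono := strictMono_of_add_two_le hg
  refine Set.infinite_of_injective_forall_mem (f := fun m => g m + 1)
    (fun m m' h => hmono.injective (by simpa using h)) fun m ⟨j, hj⟩ => ?_
  have hmj : m < j := hmono.lt_iff_lt.mp (by omega)
  have := hmono.monotone (show m + 1 ≤ j from hmj)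
  have := hg m
  omega

end Gaps

lemma StrictMono.nth_mem_range {g : ℕ → ℕ} (hg : StrictMono g) : Nat.nth (· ∈ Set.range g) = g := by
  funext n
  have := Nat.nth_comp_of_strictMono (p := (· ∈ Set.range g)) (n := n) hg (fun _ h => h)
    (fun hf => absurd hf (Set.infinite_range_of_injective hg.injective))
  simpa using this.symm

section Spread

variable {c : ℕ → ℝ} {g : ℕ → ℕ}

lemma Nat.tendsto_count_atTop (p : ℕ → Prop) [DecidablePred p] (hp : {i | p i}.Infinite) :
    Tendsto (Nat.count p) atTop atTop :=
  tendsto_atTop_atTop_of_monotone (Nat.count_monotone p) fun m =>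
    ⟨Nat.nth p m, (Nat.count_nth_of_infinite hp m).ge⟩

lemma coe_mem_AAR_of_tendsto (hc : 0 ≤ c) (hg : ∀ m, g m + 2 ≤ g (m + 1)) {x : ℝ}
    (hlow : Tendsto (fun m => (∑ j ∈ range m, c j) / g m) atTop (𝓝 x))
    (hup : Tendsto (fun m => (∑ j ∈ range (m + 1), c j) / (g m + 1)) atTop (𝓝 x)) :
    (x : EReal) ∈ AAR (interleave (fun _ => 0) c) := by
  classical
  set p : ℕ → Prop := (· ∈ Set.range g)
  have hp : {i | p i}.Infinite :=
    Set.infinite_range_of_injective (strictMono_of_add_two_le hg).injective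
  have hnth : Nat.nth p = g := (strictMono_of_add_two_le hg).nth_mem_range
  have hcount := Nat.tendsto_count_atTop p hp
  refine ⟨interleaveIndex p, interleaveIndex_bijective p hp
    (infinite_compl_range_of_add_two_le hg), EReal.tendsto_coe.mpr ?_⟩
  refine tendsto_of_tendsto_of_tendsto_of_le_of_le' (hlow.comp hcount)
    (hup.comp ((tendsto_sub_atTop_nat 1).comp hcount)) ?_ ?_
  · refine Eventually.of_forall fun n => ?_
    simpa [hnth] using div_nth_count_le_avgSeq p hc hp n
  · filter_upwards [hcount.eventually_ge_atTop 1] with n hn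
    simpa [hnth] using avgSeq_le_div_nth_add_one p hc (m := Nat.count p n - 1) (by omega)

lemma top_mem_AAR_of_tendsto (hc : 0 ≤ c) (hg : ∀ m, g m + 2 ≤ g (m + 1))
    (hlow : Tendsto (fun m => (∑ j ∈ range m, c j) / g m) atTop atTop) :
    ⊤ ∈ AAR (interleave (fun _ => 0) c) := by
  classical
  set p : ℕ → Prop := (· ∈ Set.range g)
  have hp : {i | p i}.Infinite :=
    Set.infinite_range_of_injective (strictMono_of_add_two_le hg).injective
  have hnth : Nat.nth p = g := (strictMono_of_add_two_le hg).nth_mem_range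
  refine ⟨interleaveIndex p, interleaveIndex_bijective p hp
    (infinite_compl_range_of_add_two_le hg), EReal.tendsto_coe_nhds_top_iff.mpr ?_⟩
  refine tendsto_atTop_mono (fun n => ?_) (hlow.comp (Nat.tendsto_count_atTop p hp))
  simpa [hnth] using div_nth_count_le_avgSeq p hc hp n

end Spread

noncomputable def spacing (h : ℕ → ℝ) (m : ℕ) : ℕ := 2 * m + 1 + ⌈h m⌉₊

lemma spacing_add_two_le {h : ℕ → ℝ} (hh : Monotone h) (m : ℕ) :
    spacing h m + 2 ≤ spacing h (m + 1) := by
  have := Nat.ceil_mono (hh (Nat.le_add_right m 1))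
  simp only [spacing]
  omega

lemma add_le_spacing (h : ℕ → ℝ) (m : ℕ) : 2 * (m : ℝ) + 1 + h m ≤ spacing h m := by
  have := Nat.le_ceil (h m)
  simp only [spacing]
  push_cast
  linarith

lemma spacing_lt {h : ℕ → ℝ} {m : ℕ} (hm : 0 ≤ h m) : (spacing h m : ℝ) < 2 * m + 2 + h m := by
  have := Nat.ceil_lt_add_one hm
  simp only [spacing]
  push_cast
  linarith

lemma tendsto_div_of_abs_sub_le {u v : ℕ → ℝ} {x C : ℝ} (hx : x ≠ 0)
    (hu : Tendsto (fun m => u m / (m + 1)) atTop atTop)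
    (hv : ∀ m, |v m - u m / x| ≤ C * (m + 1)) :
    Tendsto (fun m => u m / v m) atTop (𝓝 x) := by
  have hpos : ∀ᶠ m in atTop, 0 < u m := by
    filter_upwards [hu.eventually_gt_atTop 0] with m hm
    exact (div_pos_iff_of_pos_right (by positivity)).mp hm
  have herr : Tendsto (fun m => (v m - u m / x) / u m) atTop (𝓝 0) := by
    refine squeeze_zero_norm' ?_ (tendsto_const_nhds.div_atTop hu (a := C))
    filter_upwards [hpos] with m hm
    rw [norm_div, Real.norm_of_nonneg hm.le, div_div_eq_mul_div, div_le_div_iff_of_pos_right hm]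
    exact hv m
  have hinv : Tendsto (fun m => v m / u m) atTop (𝓝 x⁻¹) := by
    rw [← add_zero x⁻¹]
    refine (herr.const_add x⁻¹).congr' ?_
    filter_upwards [hpos] with m hm
    field_simp
    ring
  simpa using hinv.inv₀ (inv_ne_zero hx)

lemma AAR_subset_of_nonneg {a : ℕ → ℝ} (ha : 0 ≤ a) : AAR a ⊆ {α | 0 ≤ α} := by
  rintro α ⟨p, -, hp⟩
  exact ge_of_tendsto' hp fun n =>
    EReal.coe_nonneg.mpr (div_nonneg (sum_nonneg fun i _ => ha _) n.cast_nonneg)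

section InterleaveZero

variable {c : ℕ → ℝ}

lemma interleave_zero_nonneg (hc : 0 ≤ c) : 0 ≤ interleave (fun _ => 0) c := fun n => by
  unfold interleave
  split_ifs
  exacts [le_rfl, hc (n / 2)]

lemma monotone_sum_range (hc : 0 ≤ c) : Monotone fun m => ∑ j ∈ range m, c j :=
  fun _ _ hab => sum_le_sum_of_subset_of_nonneg (range_mono hab) fun j _ _ => hc j

lemma tendsto_sum_range_div_sum_range_succ
    (hpos : ∀ᶠ m in atTop, ∑ j ∈ range m, c j ≠ 0)
    (hcS : Tendsto (fun m => c m / ∑ j ∈ range m, c j) atTop (𝓝 0)) :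
    Tendsto (fun m => (∑ j ∈ range m, c j) / ∑ j ∈ range (m + 1), c j) atTop (𝓝 1) := by
  have hsucc : Tendsto (fun m => (∑ j ∈ range (m + 1), c j) / ∑ j ∈ range m, c j)
      atTop (𝓝 1) := by
    have h1 := hcS.const_add 1
    rw [add_zero] at h1
    refine h1.congr' ?_
    filter_upwards [hpos] with m hm
    rw [sum_range_succ, add_div, div_self hm]
  simpa using hsucc.inv₀ one_ne_zero

lemma zero_mem_AAR_interleave_zero (hc : 0 ≤ c) :
    ((0 : ℝ) : EReal) ∈ AAR (interleave (fun _ => 0) c) := by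
  set S : ℕ → ℝ := fun m => ∑ j ∈ range m, c j
  have hS : ∀ m, 0 ≤ S m := fun m => sum_nonneg fun j _ => hc j
  have hh : Monotone fun m : ℕ => ((m : ℝ) + 1) * S (m + 1) := fun a b hab =>
    mul_le_mul (by exact_mod_cast Nat.add_le_add_right hab 1)
      (monotone_sum_range hc (Nat.add_le_add_right hab 1)) (hS _) (by positivity)
  set g := spacing fun m : ℕ => ((m : ℝ) + 1) * S (m + 1)
  -- `g m` exceeds `(m + 1) * S (m + 1)`, so both bounds are at most `1 / (m + 1)`
  have hsmall : ∀ m (s G : ℝ), 0 ≤ s → s ≤ S (m + 1) → (g m : ℝ) ≤ G → s / G ≤ 1 / (m + 1) := by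
    intro m s G hs hsS hG
    have hg := add_le_spacing (fun k : ℕ => ((k : ℝ) + 1) * S (k + 1)) m
    rw [div_le_div_iff₀ (by nlinarith [hS (m + 1)]) (by positivity)]
    nlinarith
  refine coe_mem_AAR_of_tendsto hc (spacing_add_two_le hh) ?_ ?_
  · refine squeeze_zero (fun m => div_nonneg (hS m) (Nat.cast_nonneg _))
      (fun m => hsmall m _ _ (hS m) (monotone_sum_range hc m.le_succ) le_rfl)
      tendsto_one_div_add_atTop_nhds_zero_nat
  · refine squeeze_zero (fun m => div_nonneg (hS _) (by positivity))
      (fun m => hsmall m _ _ (hS _) le_rfl (by linarith))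
      tendsto_one_div_add_atTop_nhds_zero_nat

lemma top_mem_AAR_interleave_zero (hc : 0 ≤ c)
    (hS : Tendsto (fun m => (∑ j ∈ range m, c j) / m) atTop atTop) :
    ⊤ ∈ AAR (interleave (fun _ => 0) c) := by
  refine top_mem_AAR_of_tendsto hc (g := spacing 0) (spacing_add_two_le monotone_const)
    (tendsto_atTop_mono' _ ?_ (hS.atTop_div_const (by norm_num : (0 : ℝ) < 3)))
  filter_upwards [eventually_ge_atTop 1] with m hm
  have hm' : (1 : ℝ) ≤ m := by exact_mod_cast hm
  simp only [spacing, Pi.zero_apply, Nat.ceil_zero, add_zero]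
  push_cast
  rw [div_div]
  exact div_le_div_of_nonneg_left (sum_nonneg fun j _ => hc j) (by positivity) (by linarith)

lemma coe_mem_AAR_interleave_zero (hc : 0 ≤ c)
    (hS : Tendsto (fun m => (∑ j ∈ range m, c j) / m) atTop atTop)
    (hcS : Tendsto (fun m => c m / ∑ j ∈ range m, c j) atTop (𝓝 0)) {x : ℝ} (hx : 0 < x) :
    (x : EReal) ∈ AAR (interleave (fun _ => 0) c) := by
  set S : ℕ → ℝ := fun m => ∑ j ∈ range m, c j
  have hS0 : ∀ m, 0 ≤ S m := fun m => sum_nonneg fun j _ => hc j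
  have hpos : ∀ᶠ m in atTop, 0 < S m := by
    filter_upwards [hS.eventually_gt_atTop 0, eventually_ge_atTop 1] with m hm hm1
    exact (div_pos_iff_of_pos_right (by exact_mod_cast hm1)).mp hm
  have hu : Tendsto (fun m => S (m + 1) / ((m : ℝ) + 1)) atTop atTop := by
    simpa using (tendsto_add_atTop_iff_nat 1).mpr hS
  set h : ℕ → ℝ := fun m => S (m + 1) / x
  have hh0 : ∀ m, 0 ≤ h m := fun m => div_nonneg (hS0 _) hx.le
  have hh : Monotone h := fun a b hab =>
    div_le_div_of_nonneg_right (monotone_sum_range hc (Nat.add_le_add_right hab 1)) hx.le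
  set g := spacing h
  have hmid : Tendsto (fun m => S (m + 1) / g m) atTop (𝓝 x) := by
    refine tendsto_div_of_abs_sub_le hx.ne' hu (C := 2) fun m => ?_
    have := add_le_spacing h m
    have := spacing_lt (hh0 m)
    rw [abs_le]
    constructor <;> linarith
  have hup : Tendsto (fun m => S (m + 1) / (g m + 1)) atTop (𝓝 x) := by
    refine tendsto_div_of_abs_sub_le hx.ne' hu (C := 3) fun m => ?_
    have := add_le_spacing h m
    have := spacing_lt (hh0 m)
    rw [abs_le]
    constructor <;> linarith
  have hlow : Tendsto (fun m => S m / g m) atTop (𝓝 x) := by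
    have := (tendsto_sum_range_div_sum_range_succ (hpos.mono fun m hm => hm.ne') hcS).mul hmid
    rw [one_mul] at this
    refine this.congr' ?_
    filter_upwards [hpos] with m hm
    have : S (m + 1) ≠ 0 := (hm.trans_le (monotone_sum_range hc m.le_succ)).ne'
    exact div_mul_div_cancel₀ this
  exact coe_mem_AAR_of_tendsto hc (spacing_add_two_le hh) hlow hup

theorem AAR_interleave_zero (hc : 0 ≤ c)
    (hS : Tendsto (fun m => (∑ j ∈ range m, c j) / m) atTop atTop)
    (hcS : Tendsto (fun m => c m / ∑ j ∈ range m, c j) atTop (𝓝 0)) :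
    AAR (interleave (fun _ => 0) c) = {α | 0 ≤ α} := by
  refine (AAR_subset_of_nonneg (interleave_zero_nonneg hc)).antisymm fun α hα => ?_
  induction α using EReal.rec with
  | bot => simp at hα
  | top => exact top_mem_AAR_interleave_zero hc hS
  | coe x =>
    rcases (EReal.coe_nonneg.mp hα).eq_or_lt with rfl | hx
    · exact zero_mem_AAR_interleave_zero hc
    · exact coe_mem_AAR_interleave_zero hc hS hcS hx

end InterleaveZero

section PowerSums

variable {k : ℕ} (hk : 1 ≤ k)
include hk

lemma mul_succ_pow_le_two_pow_mul_sum_range (m : ℕ) :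
    m * (m + 1) ^ k ≤ 2 ^ k * ∑ j ∈ range m, (j + 1) ^ k := by
  calc m * (m + 1) ^ k = ∑ j ∈ range m, ((j + 1) + (m - 1 - j + 1)) ^ k := by
        rw [sum_congr rfl fun j hj => by rw [show j + 1 + (m - 1 - j + 1) = m + 1 by
          simp at hj; omega]]
        simp
    _ ≤ ∑ j ∈ range m, 2 ^ (k - 1) * ((j + 1) ^ k + (m - 1 - j + 1) ^ k) :=
        sum_le_sum fun j _ => add_pow_le (Nat.zero_le _) (Nat.zero_le _) k
    _ = 2 ^ (k - 1) * 2 * ∑ j ∈ range m, (j + 1) ^ k := by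
        rw [← mul_sum, sum_add_distrib, sum_range_reflect (fun j => (j + 1) ^ k) m]
        ring
    _ = 2 ^ k * ∑ j ∈ range m, (j + 1) ^ k := by
        rw [← pow_succ, Nat.sub_add_cancel hk]

lemma tendsto_sum_range_succ_pow_div_atTop :
    Tendsto (fun m : ℕ => (∑ j ∈ range m, ((j : ℝ) + 1) ^ k) / m) atTop atTop := by
  refine tendsto_atTop_mono' _ ?_ ((tendsto_atTop_add_const_right _ 1
    tendsto_natCast_atTop_atTop).atTop_div_const (by positivity : (0 : ℝ) < 2 ^ k))
  filter_upwards [eventually_ge_atTop 1] with m hm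
  have hbound : (m : ℝ) * ((m : ℝ) + 1) ^ k ≤ 2 ^ k * ∑ j ∈ range m, ((j : ℝ) + 1) ^ k := by
    exact_mod_cast mul_succ_pow_le_two_pow_mul_sum_range hk m
  have hm' : (0 : ℝ) < m := by exact_mod_cast hm
  have := le_self_pow₀ (by linarith : (1 : ℝ) ≤ m + 1) (by omega : k ≠ 0)
  rw [div_le_div_iff₀ (by positivity) hm']
  nlinarith

lemma tendsto_succ_pow_div_sum_range_succ_pow :
    Tendsto (fun m : ℕ => ((m : ℝ) + 1) ^ k / ∑ j ∈ range m, ((j : ℝ) + 1) ^ k) atTop (𝓝 0) := by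
  refine squeeze_zero' (Eventually.of_forall fun m => by positivity) ?_
    (tendsto_const_div_atTop_nhds_zero_nat (2 ^ k))
  filter_upwards [eventually_ge_atTop 1] with m hm
  have hbound : (m : ℝ) * ((m : ℝ) + 1) ^ k ≤ 2 ^ k * ∑ j ∈ range m, ((j : ℝ) + 1) ^ k := by
    exact_mod_cast mul_succ_pow_le_two_pow_mul_sum_range hk m
  have hm' : (0 : ℝ) < m := by exact_mod_cast hm
  have hpos : 0 < ∑ j ∈ range m, ((j : ℝ) + 1) ^ k :=
    sum_pos (fun j _ => by positivity) (nonempty_range_iff.mpr (by omega))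
  rw [div_le_div_iff₀ hpos hm']
  linarith

end PowerSums

/-- For `k ≥ 1` and `(a_n) = (0)||(n^k)` (1-indexed, so the second component is
`(n+1)^k` in 0-indexed form), `AAR_{(a_n)}` is the extended-real interval `[0, +∞]`. -/
theorem stmt12 (k : ℕ) (hk : 1 ≤ k) :
    AAR (interleave (fun _ => 0) (fun n => ((n : ℝ) + 1) ^ k)) =
      {α : EReal | 0 ≤ α} :=
  AAR_interleave_zero (fun n => by positivity) (tendsto_sum_range_succ_pow_div_atTop hk)
    (tendsto_succ_pow_div_sum_range_succ_pow hk)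
end

section
/- Let d > 1 be a real number and let (a_n) = (b_n)||(c_n), where b_n ≡ 0 and c_n = d^n. Then AAR_{(a_n)} = {0, +∞}. -/
open Filter Topology

/-! The nonzero terms `dᵐ` are `d`-lacunary: of two distinct terms the smaller is at most `1/d`
times the larger, so all terms below a given one sum to at most `1/(d - 1)` times it. In any
rearrangement the partial sums therefore grow by a factor `d` at each of the infinitely many
record terms, which rules out means converging to a finite positive limit; since the means are
nonnegative, only `0` and `+∞` remain. The identity arrangement has means at least
`d^⌊n/2⌋ / n → ∞`, and placing `d^(m+1)` at a position beyond `d^(2m+2)` keeps every term below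
`√n`, hence the partial sums below `d √n / (d - 1)`, so the means tend to `0`.
-/

open Finset Function

def IsLacunary {ι : Type*} (d : ℝ) (u : ι → ℝ) : Prop :=
  ∀ ⦃i j⦄, i ≠ j → u i ≤ u j → d * u i ≤ u j

namespace IsLacunary

variable {ι κ : Type*} {d : ℝ} {u : ι → ℝ}

theorem comp (hu : IsLacunary d u) {p : κ → ι} (hp : Injective p) : IsLacunary d (u ∘ p) :=
  fun _ _ hij => hu (hp.ne hij)

theorem sub_one_mul_sum_le [DecidableEq ι] (hu : IsLacunary d u) (hu0 : ∀ i, 0 ≤ u i)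
    (s : Finset ι) {Y : ℝ} (hY : 0 ≤ Y) (hs : ∀ i ∈ s, d * u i ≤ Y) :
    (d - 1) * ∑ i ∈ s, u i ≤ Y := by
  induction s using Finset.induction_on_max_value u generalizing Y with
  | empty => simpa using hY
  | insert i₀ s hi₀ hmax ih =>
    have hrest : (d - 1) * ∑ i ∈ s, u i ≤ u i₀ :=
      ih (hu0 i₀) fun i hi => hu (ne_of_mem_of_not_mem hi hi₀) (hmax i hi)
    rw [sum_insert hi₀]
    linarith [hs i₀ (mem_insert_self i₀ s)]

theorem mul_sum_range_le {u : ℕ → ℝ} (hu : IsLacunary d u) (hu0 : ∀ i, 0 ≤ u i) {n : ℕ}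
    (hn : ∀ i < n, u i ≤ u n) :
    d * ∑ i ∈ range n, u i ≤ ∑ i ∈ range (n + 1), u i := by
  have := hu.sub_one_mul_sum_le hu0 (range n) (hu0 n) fun i hi =>
    hu (mem_range.1 hi).ne (hn i (mem_range.1 hi))
  rw [sum_range_succ]
  linarith

end IsLacunary

theorem isLacunary_pow {d : ℝ} (hd : 1 < d) : IsLacunary d (d ^ · : ℕ → ℝ) := by
  intro i j hij hle
  have hlt : i < j := lt_of_le_of_ne ((pow_le_pow_iff_right₀ hd).1 hle) hij
  rw [← pow_succ']
  exact pow_le_pow_right₀ hd.le hlt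

theorem frequently_high_scores_of_not_bddAbove {β : Type*} [LinearOrder β] {u : ℕ → β}
    (hu : ¬BddAbove (Set.range u)) : ∃ᶠ n in atTop, ∀ k < n, u k < u n := by
  classical
  rw [frequently_atTop]
  intro N
  obtain ⟨k, -, hk⟩ : ∃ k ≤ N, ∀ l ≤ N, u l ≤ u k :=
    Set.exists_max_image {l | l ≤ N} u (Set.finite_le_nat N) ⟨N, le_refl N⟩
  have hex : ∃ n, u k < u n := by
    simp only [not_bddAbove_iff, Set.exists_range_iff] at hu
    exact hu (u k)
  refine ⟨Nat.find hex, ?_, fun m hm => ?_⟩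
  · by_contra! h
    exact (Nat.find_spec hex).not_ge (hk _ h.le)
  · exact (not_lt.1 (Nat.find_min hex hm)).trans_lt (Nat.find_spec hex)

theorem le_of_tendsto_avg_of_frequently_mul_le {S : ℕ → ℝ} {d x : ℝ}
    (hS : Tendsto (fun n => S n / n) atTop (𝓝 x)) (h : ∃ᶠ n in atTop, d * S n ≤ S (n + 1)) :
    d * x ≤ x := by
  have hleft : Tendsto (fun n : ℕ => d * ((n : ℝ) / (n + 1)) * (S n / n)) atTop (𝓝 (d * 1 * x)) :=
    ((tendsto_natCast_div_add_atTop (1 : ℝ)).const_mul d).mul hS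
  have hright : Tendsto (fun n : ℕ => S (n + 1) / ((n + 1 : ℕ) : ℝ)) atTop (𝓝 x) :=
    hS.comp (tendsto_add_atTop_nat 1)
  rw [mul_one] at hleft
  refine le_of_tendsto_of_tendsto_of_frequently hleft hright ?_
  refine (h.and_eventually (eventually_ne_atTop 0)).mono fun n ⟨hn, hn0⟩ => ?_
  have hn0' : (n : ℝ) ≠ 0 := Nat.cast_ne_zero.2 hn0
  have hn1 : (0 : ℝ) < n + 1 := by positivity
  calc d * ((n : ℝ) / (n + 1)) * (S n / n) = d * S n / (n + 1) := by field_simp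
    _ ≤ S (n + 1) / (n + 1) := by gcongr
    _ = S (n + 1) / ((n + 1 : ℕ) : ℝ) := by push_cast; rfl

theorem avgSeq_nonneg {u : ℕ → ℝ} (hu : ∀ i, 0 ≤ u i) (n : ℕ) : 0 ≤ avgSeq u n :=
  div_nonneg (sum_nonneg fun i _ => hu i) n.cast_nonneg

theorem eq_zero_or_top_of_mem_AAR {a : ℕ → ℝ} {d : ℝ} (hd : 1 < d) (ha0 : ∀ k, 0 ≤ a k)
    (ha : IsLacunary d a) (hbdd : ¬BddAbove (Set.range a)) {α : EReal} (hα : α ∈ AAR a) :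
    α = 0 ∨ α = ⊤ := by
  obtain ⟨p, hp, hlim⟩ := hα
  have hu0 : ∀ n, 0 ≤ a (p n) := fun n => ha0 (p n)
  have hjump : ∃ᶠ n in atTop,
      d * ∑ i ∈ range n, a (p i) ≤ ∑ i ∈ range (n + 1), a (p i) := by
    rw [← hp.surjective.range_comp] at hbdd
    exact (frequently_high_scores_of_not_bddAbove hbdd).mono fun n hn =>
      (ha.comp hp.injective).mul_sum_range_le hu0 fun i hi => (hn i hi).le
  have hα0 : 0 ≤ α := ge_of_tendsto' hlim fun n => EReal.coe_nonneg.2 (avgSeq_nonneg hu0 n)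
  induction α using EReal.rec with
  | bot => exact absurd hα0 (by simp)
  | top => exact Or.inr rfl
  | coe x =>
    have hx := le_of_tendsto_avg_of_frequently_mul_le (EReal.tendsto_coe.1 hlim) hjump
    have hx0 : 0 ≤ x := EReal.coe_nonneg.1 hα0
    left
    norm_cast
    nlinarith

theorem tendsto_avgSeq_zero_of_le_sqrt {u : ℕ → ℝ} {d : ℝ} (hd : 1 < d) (hu0 : ∀ i, 0 ≤ u i)
    (hu : IsLacunary d u) (hsqrt : ∀ i, u i ≤ √i) : Tendsto (avgSeq u) atTop (𝓝 0) := by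
  have hbound : ∀ n, avgSeq u n ≤ d / (d - 1) * (√n)⁻¹ := by
    intro n
    have hsum : (d - 1) * ∑ i ∈ range n, u i ≤ d * √n :=
      hu.sub_one_mul_sum_le hu0 (range n) (by positivity) fun i hi =>
        mul_le_mul_of_nonneg_left ((hsqrt i).trans
          (Real.sqrt_le_sqrt (by exact_mod_cast (mem_range.1 hi).le))) (by linarith)
    have hsum' : ∑ i ∈ range n, u i ≤ d / (d - 1) * √n := by
      rw [div_mul_eq_mul_div, le_div_iff₀' (by linarith)]
      exact hsum
    rw [← one_div, ← Real.sqrt_div_self', mul_div_assoc']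
    exact div_le_div_of_nonneg_right hsum' n.cast_nonneg
  have hlim : Tendsto (fun n : ℕ => d / (d - 1) * (√n)⁻¹) atTop (𝓝 0) := by
    simpa using (tendsto_inv_atTop_zero.comp
      (Real.tendsto_sqrt_atTop.comp tendsto_natCast_atTop_atTop)).const_mul (d / (d - 1))
  exact tendsto_of_tendsto_of_tendsto_of_le_of_le tendsto_const_nhds hlim
    (avgSeq_nonneg hu0) hbound

theorem exists_equiv_apply_eq_two_mul_add_one {f : ℕ → ℕ} (hf : Injective f)
    (hfc : (Set.range f)ᶜ.Infinite) :
    ∃ p : ℕ ≃ ℕ, (∀ m, p (f m) = 2 * m + 1) ∧ ∀ n ∉ Set.range f, Even (p n) := by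
  classical
  have := hfc.to_subtype
  let e : ℕ ≃ ((Set.range f)ᶜ : Set ℕ) := (Denumerable.ofEncodableOfInfinite _).eqv.symm
  refine ⟨(Equiv.Set.sumCompl (Set.range f)).symm.trans <|
    (Equiv.sumCongr (Equiv.ofInjective f hf).symm e.symm).trans <|
    (Equiv.sumComm _ _).trans Equiv.natSumNatEquivNat, fun m => ?_, fun n hn => ?_⟩
  · simp [Equiv.Set.sumCompl_symm_apply_of_mem (Set.mem_range_self m)]
  · simp [Equiv.Set.sumCompl_symm_apply_of_notMem hn]

section interleave

variable {b c : ℕ → ℝ}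

@[simp]
theorem interleave_two_mul (n : ℕ) : interleave b c (2 * n) = b n := by
  simp [interleave]

@[simp]
theorem interleave_two_mul_add_one (n : ℕ) : interleave b c (2 * n + 1) = c n := by
  simp [interleave, Nat.add_mod, Nat.add_div_of_dvd_right]

theorem interleave_nonneg (hb : ∀ n, 0 ≤ b n) (hc : ∀ n, 0 ≤ c n) (k : ℕ) :
    0 ≤ interleave b c k := by
  unfold interleave
  split_ifs
  exacts [hb _, hc _]

theorem IsLacunary.interleave_zero_left {d : ℝ} (hc : IsLacunary d c) (hc0 : ∀ n, 0 ≤ c n) :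
    IsLacunary d (interleave (fun _ => 0) c) := by
  intro k k' hkk' hle
  obtain ⟨i, rfl | rfl⟩ := Nat.even_or_odd' k <;> obtain ⟨j, rfl | rfl⟩ := Nat.even_or_odd' k'
  · simp
  · simpa using hc0 j
  · simp only [interleave_two_mul, interleave_two_mul_add_one] at hle ⊢
    simp [le_antisymm hle (hc0 i)]
  · simp only [interleave_two_mul_add_one] at hle ⊢
    exact hc (by omega) hle

end interleave

theorem tendsto_pow_div_natCast_atTop {d : ℝ} (hd : 1 < d) :
    Tendsto (fun k : ℕ => d ^ k / k) atTop atTop := by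
  have hpos : ∀ᶠ k : ℕ in atTop, 0 < (k : ℝ) ^ 1 / d ^ k :=
    (eventually_ne_atTop 0).mono fun k hk => by positivity
  simpa [Pi.inv_def] using (tendsto_nhdsWithin_iff.2
    ⟨tendsto_pow_const_div_const_pow_of_one_lt 1 hd, hpos⟩).inv_tendsto_nhdsGT_zero

section powers

variable {d : ℝ}

theorem not_bddAbove_range_interleave_pow (hd : 1 < d) :
    ¬BddAbove (Set.range (interleave (fun _ => 0) (fun n => d ^ (n + 1)))) := by
  rw [not_bddAbove_iff]
  intro B
  obtain ⟨n, hn⟩ := pow_unbounded_of_one_lt B hd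
  exact ⟨_, ⟨2 * n + 1, rfl⟩, by
    simpa using hn.trans_le (pow_le_pow_right₀ hd.le n.le_succ)⟩

theorem tendsto_avgSeq_interleave_pow_atTop (hd : 1 < d) :
    Tendsto (avgSeq (interleave (fun _ => 0) (fun n => d ^ (n + 1)))) atTop atTop := by
  refine tendsto_atTop_mono' _ ?_ <| ((tendsto_pow_div_natCast_atTop hd).comp
    (Nat.tendsto_div_const_atTop two_ne_zero)).atTop_div_const (by norm_num : (0 : ℝ) < 3)
  filter_upwards [eventually_ge_atTop 2] with n hn
  have hk : 1 ≤ n / 2 := by omega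
  have hterm : d ^ (n / 2) ≤ ∑ i ∈ range n, interleave (fun _ => 0) (fun n => d ^ (n + 1)) i := by
    have := single_le_sum (f := interleave (fun _ => 0) (fun n => d ^ (n + 1)))
      (fun i _ => interleave_nonneg (fun _ => le_rfl) (fun m => by positivity) i)
      (mem_range.2 (show 2 * (n / 2 - 1) + 1 < n by omega))
    rwa [interleave_two_mul_add_one, Nat.sub_add_cancel hk] at this
  have hn3 : (n : ℝ) ≤ 3 * (n / 2 : ℕ) := by exact_mod_cast (by omega : n ≤ 3 * (n / 2))
  calc d ^ (n / 2) / ((n / 2 : ℕ) : ℝ) / 3 = d ^ (n / 2) / (3 * (n / 2 : ℕ)) := by ring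
    _ ≤ d ^ (n / 2) / n :=
      div_le_div_of_nonneg_left (by positivity) (by positivity) hn3
    _ ≤ _ := div_le_div_of_nonneg_right hterm n.cast_nonneg

theorem exists_bijective_interleave_pow_le_sqrt (hd : 1 < d) :
    ∃ p : ℕ → ℕ, Bijective p ∧
      ∀ n, interleave (fun _ => 0) (fun m => d ^ (m + 1)) (p n) ≤ √n := by
  set K := ⌈d⌉₊
  have hK : 2 ≤ K := Nat.lt_ceil.2 (by exact_mod_cast hd)
  set f : ℕ → ℕ := fun m => 2 * (K ^ (m + 1)) ^ 2
  have hf : Injective f := by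
    intro m m' h
    have := Nat.pow_right_injective hK <| Nat.pow_left_injective two_ne_zero <|
      Nat.eq_of_mul_eq_mul_left two_pos h
    omega
  have hfc : (Set.range f)ᶜ.Infinite := by
    refine Set.infinite_of_injective_forall_mem (f := fun n => 2 * n + 1)
      (fun _ _ h => by simpa using h) ?_
    rintro n ⟨m, hm⟩
    simp only [f] at hm
    omega
  obtain ⟨p, hpf, hpe⟩ := exists_equiv_apply_eq_two_mul_add_one hf hfc
  refine ⟨p, p.bijective, fun n => ?_⟩
  by_cases hn : n ∈ Set.range f
  · obtain ⟨m, rfl⟩ := hn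
    rw [hpf, interleave_two_mul_add_one, Real.le_sqrt (by positivity) (by positivity)]
    calc (d ^ (m + 1)) ^ 2 ≤ ((K : ℝ) ^ (m + 1)) ^ 2 := by gcongr; exact Nat.le_ceil d
      _ ≤ 2 * ((K : ℝ) ^ (m + 1)) ^ 2 := by linarith [sq_nonneg ((K : ℝ) ^ (m + 1))]
      _ = f m := by push_cast [f]; rfl
  · obtain ⟨k, hk⟩ := hpe n hn
    rw [hk, ← two_mul, interleave_two_mul]
    positivity

end powers

/-- The paper's `cₙ = dⁿ` is 1-indexed, whence `d ^ (n + 1)` in the 0-indexed `interleave`. -/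
theorem stmt13 (d : ℝ) (hd : 1 < d) :
    AAR (interleave (fun _ => 0) (fun n => d ^ (n + 1))) =
      {(0 : EReal), (⊤ : EReal)} := by
  have hpow0 : ∀ n, 0 ≤ d ^ (n + 1) := fun n => pow_nonneg (by linarith) _
  have ha0 : ∀ k, 0 ≤ interleave (fun _ => 0) (fun n => d ^ (n + 1)) k :=
    interleave_nonneg (fun _ => le_rfl) hpow0
  have hlac : IsLacunary d (interleave (fun _ => 0) (fun n => d ^ (n + 1))) :=
    ((isLacunary_pow hd).comp (add_left_injective 1)).interleave_zero_left hpow0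
  ext α
  refine ⟨eq_zero_or_top_of_mem_AAR hd ha0 hlac (not_bddAbove_range_interleave_pow hd), ?_⟩
  rintro (rfl | rfl)
  · obtain ⟨p, hp, hsqrt⟩ := exists_bijective_interleave_pow_le_sqrt hd
    exact ⟨p, hp, EReal.tendsto_coe.2 <|
      tendsto_avgSeq_zero_of_le_sqrt hd (fun n => ha0 (p n)) (hlac.comp hp.injective) hsqrt⟩
  · exact ⟨id, bijective_id,
      EReal.tendsto_coe_nhds_top_iff.2 (tendsto_avgSeq_interleave_pow_atTop hd)⟩
end

section
/- Let (c_n) be a sequence of positive reals with c_n → +∞ and c_{n-1}/c_n → 1 as n → ∞. Then (c_n) is balanced, i.e. c_n / (c_1 + ⋯ + c_{n-1}) → 0 as n → ∞. -/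
/-!
With `uₙ = (c₀ + ⋯ + cₙ₋₁) / cₙ` one has `uₙ₊₁ = (cₙ / cₙ₊₁) (uₙ + 1)`. Once the factor
`cₙ / cₙ₊₁` is close enough to `1`, each step raises `min uₙ K` by `1 / 2` until the level `K`
is reached, so `uₙ → ∞`, and `cₙ / (c₀ + ⋯ + cₙ₋₁) = uₙ⁻¹ → 0`.
-/

open Filter Topology

theorem min_add_half_le_mul_add_one {q u K ε : ℝ} (hK : 0 ≤ K) (hu : 0 ≤ u) (hε0 : 0 ≤ ε)
    (hε : ε * (K + 1) ≤ 1 / 2) (hq : 1 - ε ≤ q) : min u K + 1 / 2 ≤ q * (u + 1) := by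
  have hε1 : ε ≤ 1 / 2 := by nlinarith
  calc min u K + 1 / 2 ≤ (1 - ε) * (min u K + 1) := by
        nlinarith [mul_le_mul_of_nonneg_left (min_le_right u K) hε0]
    _ ≤ (1 - ε) * (u + 1) :=
        mul_le_mul_of_nonneg_left (by linarith [min_le_left u K]) (by linarith)
    _ ≤ q * (u + 1) := by gcongr

section Recurrence

variable {u q : ℕ → ℝ}

theorem min_half_le_of_succ_eq_mul_add_one (hu : ∀ n, 0 ≤ u n)
    (hrec : ∀ n, u (n + 1) = q n * (u n + 1)) {K ε : ℝ} (hK : 0 ≤ K) (hε0 : 0 ≤ ε)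
    (hε : ε * (K + 1) ≤ 1 / 2) {N : ℕ} (hq : ∀ n ≥ N, 1 - ε ≤ q n) (j : ℕ) :
    min (j / 2 : ℝ) K ≤ u (N + j) := by
  induction j with
  | zero => simpa using le_trans (min_le_left 0 K) (hu N)
  | succ j ih =>
    have hstep := min_add_half_le_mul_add_one hK (hu (N + j)) hε0 hε (hq (N + j) (by omega))
    calc min ((↑(j + 1) : ℝ) / 2) K ≤ min ((j : ℝ) / 2) K + 1 / 2 := by
          rw [← min_add_add_right]; push_cast
          exact min_le_min (by linarith) (by linarith)
      _ ≤ min (u (N + j)) K + 1 / 2 := by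
          linarith [le_min ih (min_le_right ((j : ℝ) / 2) K)]
      _ ≤ u (N + (j + 1)) := by rw [← add_assoc, hrec]; exact hstep

theorem tendsto_atTop_of_succ_eq_mul_add_one (hu : ∀ n, 0 ≤ u n)
    (hrec : ∀ n, u (n + 1) = q n * (u n + 1)) (hq : Tendsto q atTop (𝓝 1)) :
    Tendsto u atTop atTop := by
  refine tendsto_atTop.2 fun b => ?_
  set K := max b 0
  have hK : 0 ≤ K := le_max_right b 0
  obtain ⟨ε, hε0, hε⟩ : ∃ ε > 0, ε * (K + 1) ≤ 1 / 2 :=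
    ⟨1 / (2 * (K + 1)), by positivity, by field_simp; rfl⟩
  obtain ⟨N, hN⟩ := eventually_atTop.1 <|
    hq.eventually (eventually_ge_nhds (by linarith : 1 - ε < 1))
  obtain ⟨j₀, hj₀⟩ := exists_nat_ge (2 * K)
  refine eventually_atTop.2 ⟨N + j₀, fun n hn => ?_⟩
  have hlevel := min_half_le_of_succ_eq_mul_add_one hu hrec hK hε0.le hε hN (n - N)
  have hj : (j₀ : ℝ) ≤ (n - N : ℕ) := by exact_mod_cast Nat.le_sub_of_add_le' hn
  rw [Nat.add_sub_cancel' (by omega), min_eq_right (by linarith)] at hlevel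
  exact (le_max_left b 0).trans hlevel

end Recurrence

theorem tendsto_sum_range_div_atTop_s16 {c : ℕ → ℝ} (hpos : ∀ n, 0 < c n)
    (hrat : Tendsto (fun n => c n / c (n + 1)) atTop (𝓝 1)) :
    Tendsto (fun n => (∑ i ∈ Finset.range n, c i) / c n) atTop atTop := by
  refine tendsto_atTop_of_succ_eq_mul_add_one
    (fun n => div_nonneg (Finset.sum_nonneg fun i _ => (hpos i).le) (hpos n).le)
    (fun n => ?_) hrat
  have hcn := (hpos n).ne'
  have hcn1 := (hpos (n + 1)).ne'
  rw [Finset.sum_range_succ]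
  field_simp

theorem stmt16_general (c : ℕ → ℝ) (hpos : ∀ n, 0 < c n)
    (hrat : Tendsto (fun n => c n / c (n + 1)) atTop (𝓝 1)) :
    Tendsto (fun n => c n / ∑ i ∈ Finset.range n, c i) atTop (𝓝 0) :=
  (tendsto_sum_range_div_atTop_s16 hpos hrat).inv_tendsto_atTop.congr fun _ => inv_div _ _

/-- If `c_n > 0`, `c_n → +∞` and `c₍ₙ₋₁₎ / cₙ → 1`, then `(c_n)` is balanced:
`cₙ / (c₁ + ⋯ + c₍ₙ₋₁₎) → 0`. -/
theorem stmt16 (c : ℕ → ℝ) (hpos : ∀ n, 0 < c n) (htop : Tendsto c atTop atTop)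
    (hrat : Tendsto (fun n => c n / c (n + 1)) atTop (𝓝 1)) :
    Tendsto (fun n => c n / ∑ i ∈ Finset.range n, c i) atTop (𝓝 0) :=
  stmt16_general c hpos hrat
end

section
/- Let (a_n) = (b_n)||(c_n), where limsup_{n→∞} b_n = b for some b ∈ ℝ, (c_n) is a sequence of positive reals with c_n → +∞, and c_n / (c_1 + ⋯ + c_{n-1}) → 0 as n → ∞. Then every real number c with c > b is accessible in average by rearrangement of (a_n), i.e. c ∈ AAR_{(a_n)}. -/
open Filter Topology

/-!
Put the terms of `b` in an order in which the very negative ones come so late that the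
rearranged sequence `β` satisfies `β t ≥ -o(t)` and has partial sums `≥ -C m`; all but finitely
many terms of `β` lie below some `y < x`. Then merge `c` and `β` greedily: take the next term
of `c` while the running sum is at most `x` times the number of terms, otherwise the next term
of `β`. Both sequences are used up. Write `n` for the number of terms placed so far. A step
that uses `c` starts from a non-positive excess over `x n`, and it adds `c_k - x = o(n)`,
because `c_k = o(c_0 + ⋯ + c_{k-1})` and that sum is `O(n)` while the excess is non-positive.
A step that uses `β` starts from a positive excess, and it either lowers the excess or leaves
it above `-o(n)`. So the excess is `o(n)` and the averages tend to `x`.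
-/

open Finset

namespace Nat

variable {p : ℕ → Prop} [DecidablePred p]

theorem count_add_count_not (n : ℕ) : count p n + count (¬p ·) n = n := by
  induction n with
  | zero => simp
  | succ n ih => by_cases h : p n <;> simp [count_succ, h] <;> omega

theorem tendsto_count_atTop_s17 (hp : {n | p n}.Infinite) : Tendsto (count p) atTop atTop :=
  tendsto_atTop_atTop.2 fun j => ⟨nth p j + 1, fun _ hn =>
    (Nat.le_succ j).trans ((count_nth_succ_of_infinite hp j).symm.trans_le (count_monotone p hn))⟩

theorem nth_mem_range_of_strictMono {f : ℕ → ℕ} (hf : StrictMono f) :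
    nth (· ∈ Set.range f) = f := by
  ext n
  have h := nth_comp_of_strictMono (p := (· ∈ Set.range f)) (n := n) hf (fun _ hk => hk)
    (fun hfi => absurd hfi (Set.infinite_range_of_injective hf.injective))
  simpa [nth_of_forall (p := fun i => f i ∈ Set.range f) (fun _ _ => ⟨_, rfl⟩)] using h.symm

end Nat

theorem Set.Infinite.exists_subset_infinite_compl {s : Set ℕ} (hs : s.Infinite) :
    ∃ t ⊆ s, t.Infinite ∧ tᶜ.Infinite := by
  have hinj := Nat.nth_injective hs
  refine ⟨Set.range fun i => Nat.nth (· ∈ s) (2 * i), ?_, ?_, ?_⟩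
  · rintro _ ⟨i, rfl⟩
    exact Nat.nth_mem_of_infinite hs _
  · exact Set.infinite_range_of_injective fun i j h => by simpa using hinj h
  · refine Set.infinite_of_injective_forall_mem (f := fun i => Nat.nth (· ∈ s) (2 * i + 1))
      (fun i j h => by simpa using hinj h) fun i ⟨j, hj⟩ => ?_
    have := hinj hj
    omega

section Merge

variable (p : ℕ → Prop) [DecidablePred p]

/-- Position `n` of the merge of two sequences along `p`: positions where `p` holds read the
first sequence, the others the second, each in order. -/
def mergeIndex (n : ℕ) : ℕ ⊕ ℕ :=
  if p n then .inl (Nat.count p n) else .inr (Nat.count (¬p ·) n)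

variable {p}

theorem sumElim_nth_mergeIndex (n : ℕ) :
    Sum.elim (Nat.nth p) (Nat.nth (¬p ·)) (mergeIndex p n) = n := by
  unfold mergeIndex
  split_ifs with h
  · exact Nat.nth_count h
  · exact Nat.nth_count (p := (¬p ·)) h

theorem mergeIndex_sumElim_nth (hp : {n | p n}.Infinite) (hnp : {n | ¬p n}.Infinite)
    (s : ℕ ⊕ ℕ) : mergeIndex p (Sum.elim (Nat.nth p) (Nat.nth (¬p ·)) s) = s := by
  rcases s with j | j
  · simp [mergeIndex, Nat.nth_mem_of_infinite hp, Nat.count_nth_of_infinite hp]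
  · simp [mergeIndex, Nat.nth_mem_of_infinite hnp j, Nat.count_nth_of_infinite hnp]

theorem mergeIndex_bijective (hp : {n | p n}.Infinite) (hnp : {n | ¬p n}.Infinite) :
    Function.Bijective (mergeIndex p) :=
  Function.bijective_iff_has_inverse.2
    ⟨_, sumElim_nth_mergeIndex, mergeIndex_sumElim_nth hp hnp⟩

theorem sumElim_nth_bijective (hp : {n | p n}.Infinite) (hnp : {n | ¬p n}.Infinite) :
    Function.Bijective (Sum.elim (Nat.nth p) (Nat.nth (¬p ·))) :=
  Function.bijective_iff_has_inverse.2
    ⟨mergeIndex p, mergeIndex_sumElim_nth hp hnp, sumElim_nth_mergeIndex⟩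

theorem sum_range_sumElim_mergeIndex {M : Type*} [AddCommMonoid M] (u v : ℕ → M) (n : ℕ) :
    ∑ i ∈ range n, Sum.elim u v (mergeIndex p i) =
      ∑ j ∈ range (Nat.count p n), u j + ∑ j ∈ range (Nat.count (¬p ·) n), v j := by
  induction n with
  | zero => simp
  | succ n ih =>
    rw [sum_range_succ, ih]
    by_cases h : p n
    · simp [mergeIndex, Nat.count_succ, h, sum_range_succ, add_right_comm]
    · simp [mergeIndex, Nat.count_succ, h, sum_range_succ, add_assoc]

end Merge

theorem tendsto_atBot_of_eventually_le_sub {f : ℕ → ℝ} {γ : ℝ} (hγ : 0 < γ)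
    (h : ∀ᶠ n in atTop, f (n + 1) ≤ f n - γ) : Tendsto f atTop atBot := by
  obtain ⟨N, hN⟩ := eventually_atTop.1 h
  have hdecr : ∀ t : ℕ, f (N + t) ≤ f N - γ * t := by
    intro t
    induction t with
    | zero => simp
    | succ t ih =>
      have := hN (N + t) (by omega)
      rw [← add_assoc]
      push_cast
      linarith
  refine tendsto_atBot.2 fun a => ?_
  obtain ⟨t₀, ht₀⟩ := exists_nat_ge ((f N - a) / γ)
  filter_upwards [eventually_ge_atTop (N + t₀)] with n hn
  obtain ⟨t, rfl⟩ := Nat.exists_eq_add_of_le (le_trans (Nat.le_add_right N t₀) hn)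
  have ht : (t₀ : ℝ) ≤ t := by exact_mod_cast (show t₀ ≤ t by omega)
  have := (div_le_iff₀ hγ).1 (ht₀.trans ht)
  linarith [hdecr t]

theorem eventually_le_of_eventually_le_max {f g : ℕ → ℝ} (hg : Monotone g)
    (hg_top : Tendsto g atTop atTop) (h : ∀ᶠ n in atTop, f (n + 1) ≤ max (f n) (g n)) :
    ∀ᶠ n in atTop, f n ≤ g n := by
  obtain ⟨N, hN⟩ := eventually_atTop.1 h
  have hmax : ∀ n ≥ N, f n ≤ max (f N) (g n) := by
    intro n hn
    induction n, hn using Nat.le_induction with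
    | base => exact le_max_left _ _
    | succ n hn ih =>
      refine (hN n hn).trans (max_le ?_ ?_)
      · exact ih.trans (max_le_max le_rfl (hg n.le_succ))
      · exact (hg n.le_succ).trans (le_max_right _ _)
  filter_upwards [eventually_ge_atTop N, hg_top.eventually_ge_atTop (f N)] with n hn hfn
  exact (hmax n hn).trans (max_le hfn le_rfl)

section Slots

variable (a : ℕ → ℝ)

/-- The position of the `j`-th very negative term, whose absolute value is `a j`. -/
noncomputable def sparseSlot (j : ℕ) : ℕ := ∑ i ∈ range (j + 1), (2 ^ i * ⌈a i⌉₊ + 2)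

variable {a}

theorem sparseSlot_add_two_le (j : ℕ) : sparseSlot a j + 2 ≤ sparseSlot a (j + 1) := by
  rw [sparseSlot, sparseSlot, sum_range_succ _ (j + 1)]
  omega

theorem strictMono_sparseSlot : StrictMono (sparseSlot a) :=
  strictMono_nat_of_lt_succ fun j => by linarith [sparseSlot_add_two_le (a := a) j]

theorem infinite_compl_range_sparseSlot : (Set.range (sparseSlot a))ᶜ.Infinite := by
  refine Set.infinite_of_injective_forall_mem (f := fun j => sparseSlot a j + 1)
    (fun i j h => strictMono_sparseSlot.injective (by simpa using h)) fun j ⟨i, hi⟩ => ?_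
  have hmono := (strictMono_sparseSlot (a := a)).monotone
  rcases lt_trichotomy i j with hij | rfl | hij
  · have := hmono (Nat.succ_le_of_lt hij)
    linarith [sparseSlot_add_two_le (a := a) i]
  · omega
  · have := hmono (Nat.succ_le_of_lt hij)
    linarith [sparseSlot_add_two_le (a := a) j]

theorem le_half_pow_mul_sparseSlot (j : ℕ) : a j ≤ (1 / 2) ^ j * sparseSlot a j := by
  have h : (2 : ℝ) ^ j * ⌈a j⌉₊ ≤ sparseSlot a j := by
    have := single_le_sum (f := fun i => 2 ^ i * ⌈a i⌉₊ + 2) (fun _ _ => Nat.zero_le _)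
      (self_mem_range_succ j)
    exact_mod_cast (Nat.le_add_right _ _).trans this
  rw [one_div, inv_pow, ← div_eq_inv_mul, le_div_iff₀ (by positivity), mul_comm]
  exact (mul_le_mul_of_nonneg_left (Nat.le_ceil _) (by positivity)).trans h

end Slots

section MergeLowerBounds

variable {p : ℕ → Prop} [DecidablePred p] {u v : ℕ → ℝ} {K : ℝ}

theorem neg_mul_le_sum_range_sumElim_mergeIndex (hK : 0 ≤ K)
    (hu : ∀ j, -((1 / 2) ^ j * Nat.nth p j) ≤ u j) (hv : ∀ j, -K ≤ v j) (m : ℕ) :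
    -((K + 2) * m) ≤ ∑ t ∈ range m, Sum.elim u v (mergeIndex p t) := by
  rw [sum_range_sumElim_mergeIndex]
  have hu_sum : -(2 * (m : ℝ)) ≤ ∑ j ∈ range (Nat.count p m), u j := by
    calc -(2 * (m : ℝ)) ≤ -((∑ j ∈ range (Nat.count p m), (1 / 2 : ℝ) ^ j) * m) := by
          gcongr; exact sum_geometric_two_le _
      _ = ∑ j ∈ range (Nat.count p m), -((1 / 2) ^ j * (m : ℝ)) := by
          rw [sum_mul, ← sum_neg_distrib]
      _ ≤ ∑ j ∈ range (Nat.count p m), u j := sum_le_sum fun j hj =>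
          (hu j).trans' (by
            gcongr
            exact (Nat.nth_lt_of_lt_count (mem_range.1 hj)).le)
  have hv_sum : -(K * m) ≤ ∑ j ∈ range (Nat.count (¬p ·) m), v j := by
    calc -(K * m) ≤ -(K * Nat.count (¬p ·) m) := by
          gcongr; exact_mod_cast Nat.count_le _
      _ = ∑ j ∈ range (Nat.count (¬p ·) m), -K := by simp [mul_comm]
      _ ≤ ∑ j ∈ range (Nat.count (¬p ·) m), v j := sum_le_sum fun j _ => hv j
  linarith

theorem eventually_neg_mul_le_sumElim_mergeIndex (hp : {n | p n}.Infinite)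
    (hu : ∀ j, -((1 / 2) ^ j * Nat.nth p j) ≤ u j) (hv : ∀ j, -K ≤ v j) {δ : ℝ} (hδ : 0 < δ) :
    ∀ᶠ t in atTop, -(δ * t) ≤ Sum.elim u v (mergeIndex p t) := by
  obtain ⟨j₀, hj₀⟩ := exists_pow_lt_of_lt_one hδ (by norm_num : (1 / 2 : ℝ) < 1)
  filter_upwards [eventually_ge_atTop (Nat.nth p j₀),
    (tendsto_natCast_atTop_atTop.const_mul_atTop hδ).eventually_ge_atTop K] with t ht htK
  by_cases h : p t
  · have hj : j₀ ≤ Nat.count p t :=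
      Nat.count_nth_of_infinite hp j₀ ▸ Nat.count_monotone p ht
    have hpow : (1 / 2 : ℝ) ^ Nat.count p t ≤ δ :=
      (pow_le_pow_of_le_one (by norm_num) (by norm_num) hj).trans hj₀.le
    have := hu (Nat.count p t)
    rw [Nat.nth_count h] at this
    simp only [mergeIndex, h, if_true, Sum.elim_inl]
    nlinarith [(Nat.cast_nonneg t : (0 : ℝ) ≤ t)]
  · simp only [mergeIndex, h, if_false, Sum.elim_inr]
    linarith [hv (Nat.count (¬p ·) t)]

end MergeLowerBounds

theorem exists_rearrangement_lower_bounds {b : ℕ → ℝ} {K : ℝ} (hK : 0 ≤ K)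
    (hb : ∃ᶠ n in atTop, -K ≤ b n) :
    ∃ σ : ℕ → ℕ, Function.Bijective σ ∧ (∀ δ > 0, ∀ᶠ t in atTop, -(δ * t) ≤ b (σ t)) ∧
      ∀ m : ℕ, -((K + 2) * m) ≤ ∑ t ∈ range m, b (σ t) := by
  classical
  -- The terms indexed by `M` are `≥ -K`; the others, possibly very negative, are spread out
  -- over the sparse slots, and `M` is coinfinite so that there are infinitely many of them.
  obtain ⟨M, hMb, hM, hMc⟩ := (Nat.frequently_atTop_iff_infinite.1 hb).exists_subset_infinite_compl
  set a : ℕ → ℝ := fun j => |b (Nat.nth (· ∉ M) j)|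
  set p : ℕ → Prop := (· ∈ Set.range (sparseSlot a))
  have hp : {n | p n}.Infinite := Set.infinite_range_of_injective strictMono_sparseSlot.injective
  have hnp : {n | ¬p n}.Infinite := infinite_compl_range_sparseSlot
  have hu : ∀ j, -((1 / 2) ^ j * Nat.nth p j) ≤ b (Nat.nth (· ∉ M) j) := fun j => by
    rw [Nat.nth_mem_range_of_strictMono strictMono_sparseSlot]
    linarith [le_half_pow_mul_sparseSlot (a := a) j, neg_abs_le (b (Nat.nth (· ∉ M) j))]
  have hv : ∀ j, -K ≤ b (Nat.nth (· ∈ M) j) := fun j => hMb (Nat.nth_mem_of_infinite hM j)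
  refine ⟨Sum.elim (Nat.nth (· ∉ M)) (Nat.nth (· ∈ M)) ∘ mergeIndex p, ?_, fun δ hδ => ?_, ?_⟩
  · rw [← Sum.elim_swap]
    exact ((sumElim_nth_bijective (p := (· ∈ M)) hM hMc).comp (Equiv.sumComm ℕ ℕ).bijective).comp
      (mergeIndex_bijective hp hnp)
  · simpa only [Function.comp_apply, ← Sum.comp_elim] using
      eventually_neg_mul_le_sumElim_mergeIndex (u := b ∘ _) (v := b ∘ _) hp hu hv hδ
  · simpa only [Function.comp_apply, ← Sum.comp_elim] using
      neg_mul_le_sum_range_sumElim_mergeIndex (u := b ∘ _) (v := b ∘ _) hK hu hv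

noncomputable section Greedy

variable (c β : ℕ → ℝ) (x : ℝ)

def greedyExcess (s : ℕ × ℕ) : ℝ :=
  ∑ i ∈ range s.1, c i + ∑ j ∈ range s.2, β j - x * (s.1 + s.2)

/-- The numbers of terms of `c` and of `β` used in the first `n` steps of the greedy merge. -/
def greedyState : ℕ → ℕ × ℕ
  | 0 => (0, 0)
  | n + 1 =>
    let s := greedyState n
    if greedyExcess c β x s ≤ 0 then (s.1 + 1, s.2) else (s.1, s.2 + 1)

def GreedyTakesFirst (n : ℕ) : Prop := greedyExcess c β x (greedyState c β x n) ≤ 0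

instance : DecidablePred (GreedyTakesFirst c β x) :=
  fun _ => inferInstanceAs (Decidable (_ ≤ _))

variable {c β x}

local notation "P" => GreedyTakesFirst c β x
local notation "E[" n "]" => greedyExcess c β x (greedyState c β x n)

theorem greedyState_eq_count (n : ℕ) :
    greedyState c β x n = (Nat.count P n, Nat.count (¬P ·) n) := by
  induction n with
  | zero => simp [greedyState]
  | succ n ih =>
    have hdef : P n ↔ E[n] ≤ 0 := .rfl
    rw [greedyState]
    split_ifs with h
    · simp [ih, Nat.count_succ, hdef.2 h]
    · simp [ih, Nat.count_succ, mt hdef.1 h]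

theorem greedyExcess_greedyState (n : ℕ) :
    E[n] =
      ∑ i ∈ range n, Sum.elim c β (mergeIndex P i) - x * n := by
  rw [greedyState_eq_count, greedyExcess, sum_range_sumElim_mergeIndex]
  simp only
  rw [← Nat.cast_add, Nat.count_add_count_not]

theorem greedyExcess_succ (n : ℕ) :
    E[n + 1] = E[n] + (Sum.elim c β (mergeIndex P n) - x) := by
  simp only [greedyExcess_greedyState, sum_range_succ]
  push_cast
  ring

theorem greedyExcess_succ_of_takesFirst {n : ℕ} (h : P n) :
    E[n + 1] = E[n] + (c (Nat.count P n) - x) := by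
  simp [greedyExcess_succ, mergeIndex, h]

theorem greedyExcess_succ_of_not_takesFirst {n : ℕ} (h : ¬P n) :
    E[n + 1] = E[n] + (β (Nat.count (¬P ·) n) - x) := by
  simp [greedyExcess_succ, mergeIndex, h]

theorem infinite_setOf_greedyTakesFirst {y : ℝ} (hxy : y < x) (hβ : ∀ᶠ t in atTop, β t ≤ y) :
    {n | P n}.Infinite := by
  by_contra hfin
  have hnot : ∀ᶠ n in atTop, ¬P n :=
    Filter.not_frequently.1 (mt Nat.frequently_atTop_iff_infinite.1 hfin)
  have hcount := Nat.tendsto_count_atTop_s17 (p := (¬P ·))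
    (Nat.frequently_atTop_iff_infinite.1 hnot.frequently)
  have hdown : Tendsto (fun n => E[n]) atTop atBot := by
    refine tendsto_atBot_of_eventually_le_sub (sub_pos.2 hxy) ?_
    filter_upwards [hnot, hcount.eventually hβ] with n hn hβn
    rw [greedyExcess_succ_of_not_takesFirst hn]
    linarith
  obtain ⟨n, hpos, hneg⟩ := (hnot.and (hdown.eventually_le_atBot 0)).exists
  exact hpos hneg

theorem infinite_setOf_not_greedyTakesFirst (hc : Tendsto c atTop atTop) :
    {n | ¬P n}.Infinite := by
  by_contra hfin
  have hP : ∀ᶠ n in atTop, P n :=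
    (Filter.not_frequently.1 (mt Nat.frequently_atTop_iff_infinite.1 hfin)).mono fun _ => not_not.1
  have hcount := Nat.tendsto_count_atTop_s17 (Nat.frequently_atTop_iff_infinite.1 hP.frequently)
  have hdown : Tendsto (fun n => -E[n]) atTop atBot := by
    refine tendsto_atBot_of_eventually_le_sub one_pos ?_
    filter_upwards [hP, hcount.eventually (hc.eventually_ge_atTop (x + 1))] with n hn hcn
    rw [greedyExcess_succ_of_takesFirst hn]
    linarith
  obtain ⟨n, hn, hpos⟩ := (hP.and (hdown.eventually_le_atBot (-1))).exists
  linarith [show E[n] ≤ 0 from hn]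

theorem greedyExcess_greedyState_eq_count (n : ℕ) :
    E[n] = ∑ i ∈ range (Nat.count P n), c i + ∑ j ∈ range (Nat.count (¬P ·) n), β j - x * n := by
  rw [greedyExcess_greedyState, sum_range_sumElim_mergeIndex]

theorem eventually_greedyExcess_le {C : ℝ} (hβ : ∀ᶠ t in atTop, β t ≤ x)
    (hsum : ∀ m : ℕ, -(C * m) ≤ ∑ t ∈ range m, β t)
    (hc : ∀ δ > 0, ∀ᶠ k in atTop, c k ≤ δ * ∑ i ∈ range k, c i)
    (hP : {n | P n}.Infinite) (hnP : {n | ¬P n}.Infinite) {δ : ℝ} (hδ : 0 < δ) :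
    ∀ᶠ n in atTop, E[n] ≤ δ * n + |x| := by
  set A := |x| + |C| + 1
  have hA : 0 < A := by positivity
  refine eventually_le_of_eventually_le_max (fun m n hmn => ?_) ?_ ?_
  · gcongr
  · exact tendsto_atTop_add_const_right _ _
      (tendsto_natCast_atTop_atTop.const_mul_atTop hδ)
  filter_upwards [(Nat.tendsto_count_atTop_s17 hP).eventually (hc (δ / A) (by positivity)),
    (Nat.tendsto_count_atTop_s17 hnP).eventually hβ] with n hcn hβn
  by_cases h : P n
  · rw [greedyExcess_succ_of_takesFirst h]
    have hE : E[n] ≤ 0 := h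
    have hm : (Nat.count (¬P ·) n : ℝ) ≤ n := by exact_mod_cast Nat.count_le _
    have hS : ∑ i ∈ range (Nat.count P n), c i ≤ A * n := by
      rw [greedyExcess_greedyState_eq_count] at hE
      have hCm : C * Nat.count (¬P ·) n ≤ |C| * n :=
        (mul_le_mul_of_nonneg_right (le_abs_self C) (Nat.cast_nonneg _)).trans
          (mul_le_mul_of_nonneg_left hm (abs_nonneg C))
      have hxn : x * n ≤ |x| * n := mul_le_mul_of_nonneg_right (le_abs_self x) (Nat.cast_nonneg n)
      linarith [hsum (Nat.count (¬P ·) n), (Nat.cast_nonneg n : (0 : ℝ) ≤ n)]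
    have hck : c (Nat.count P n) ≤ δ * n := by
      calc c (Nat.count P n) ≤ δ / A * (A * n) := hcn.trans (by gcongr)
        _ = δ * n := by field_simp
    exact le_max_of_le_right (by linarith [neg_abs_le x])
  · rw [greedyExcess_succ_of_not_takesFirst h]
    exact le_max_of_le_left (by linarith)

theorem eventually_neg_le_greedyExcess (hc : Tendsto c atTop atTop)
    (hβ : ∀ δ > 0, ∀ᶠ t in atTop, -(δ * t) ≤ β t)
    (hP : {n | P n}.Infinite) (hnP : {n | ¬P n}.Infinite) {δ : ℝ} (hδ : 0 < δ) :
    ∀ᶠ n in atTop, -(δ * n + |x|) ≤ E[n] := by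
  have key : ∀ᶠ n in atTop, -E[n] ≤ δ * n + |x| := by
    refine eventually_le_of_eventually_le_max (fun m n hmn => ?_) ?_ ?_
    · gcongr
    · exact tendsto_atTop_add_const_right _ _
        (tendsto_natCast_atTop_atTop.const_mul_atTop hδ)
    filter_upwards [(Nat.tendsto_count_atTop_s17 hP).eventually (hc.eventually_ge_atTop x),
      (Nat.tendsto_count_atTop_s17 hnP).eventually (hβ δ hδ)] with n hcn hβn
    by_cases h : P n
    · rw [greedyExcess_succ_of_takesFirst h]
      exact le_max_of_le_left (by linarith)
    · rw [greedyExcess_succ_of_not_takesFirst h]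
      have hE : 0 < E[n] := lt_of_not_ge h
      have hm : δ * Nat.count (¬P ·) n ≤ δ * n := by gcongr; exact_mod_cast Nat.count_le _
      exact le_max_of_le_right (by linarith [le_abs_self x])
  filter_upwards [key] with n hn
  linarith

theorem exists_bijective_tendsto_avgSeq_sumElim {y C : ℝ} (hxy : y < x)
    (hβ : ∀ᶠ t in atTop, β t ≤ y) (hβ_lower : ∀ δ > 0, ∀ᶠ t in atTop, -(δ * t) ≤ β t)
    (hβ_sum : ∀ m : ℕ, -(C * m) ≤ ∑ t ∈ range m, β t)
    (hc : Tendsto c atTop atTop) (hc_small : ∀ δ > 0, ∀ᶠ k in atTop, c k ≤ δ * ∑ i ∈ range k, c i) :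
    ∃ e : ℕ → ℕ ⊕ ℕ, Function.Bijective e ∧ Tendsto (avgSeq (Sum.elim c β ∘ e)) atTop (𝓝 x) := by
  have hP := infinite_setOf_greedyTakesFirst (c := c) hxy hβ
  have hnP := infinite_setOf_not_greedyTakesFirst (β := β) (x := x) hc
  refine ⟨mergeIndex P, mergeIndex_bijective hP hnP, ?_⟩
  have hlittle : (fun n => E[n]) =o[atTop] (fun n : ℕ => (n : ℝ)) := by
    refine Asymptotics.isLittleO_iff.2 fun ε hε => ?_
    filter_upwards [eventually_greedyExcess_le (hβ.mono fun t ht => ht.trans hxy.le) hβ_sum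
        hc_small hP hnP (half_pos hε),
      eventually_neg_le_greedyExcess hc hβ_lower hP hnP (half_pos hε),
      (tendsto_natCast_atTop_atTop.const_mul_atTop (half_pos hε)).eventually_ge_atTop |x|]
      with n hup hlow hx
    rw [Real.norm_eq_abs, Real.norm_natCast, abs_le]
    constructor <;> linarith
  refine ((tendsto_const_nhds (x := x)).add hlittle.tendsto_div_nhds_zero).congr' ?_ |>.mono_right
    (by rw [add_zero])
  filter_upwards [eventually_ge_atTop 1] with n hn
  have hn' : (n : ℝ) ≠ 0 := by positivity
  rw [avgSeq, greedyExcess_greedyState]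
  field_simp
  simp only [Function.comp_apply]
  ring

end Greedy

theorem interleave_natSumNatEquivNat (b c : ℕ → ℝ) (s : ℕ ⊕ ℕ) :
    interleave b c (Equiv.natSumNatEquivNat s) = Sum.elim b c s := by
  rcases s with j | j
  · simp [interleave, Equiv.natSumNatEquivNat_apply]
  · simp [interleave, Equiv.natSumNatEquivNat_apply, show (2 * j + 1) / 2 = j by omega]

theorem mem_AAR_interleave {b c : ℕ → ℝ} {x : ℝ} {e : ℕ → ℕ ⊕ ℕ} (he : Function.Bijective e)
    (h : Tendsto (avgSeq (Sum.elim b c ∘ e)) atTop (𝓝 x)) : (x : EReal) ∈ AAR (interleave b c) :=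
  ⟨Equiv.natSumNatEquivNat ∘ e, Equiv.natSumNatEquivNat.bijective.comp he, by
    have : (fun n => interleave b c ((Equiv.natSumNatEquivNat ∘ e) n)) = Sum.elim b c ∘ e :=
      funext fun n => interleave_natSumNatEquivNat b c (e n)
    rw [avgTendsTo, this]
    exact EReal.tendsto_coe.2 h⟩

theorem eventually_le_mul_sum_range {c : ℕ → ℝ} (hpos : ∀ n, 0 < c n)
    (hbal : Tendsto (fun n => c n / ∑ i ∈ range n, c i) atTop (𝓝 0)) {δ : ℝ} (hδ : 0 < δ) :
    ∀ᶠ k in atTop, c k ≤ δ * ∑ i ∈ range k, c i := by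
  filter_upwards [hbal.eventually (gt_mem_nhds hδ), eventually_ge_atTop 1] with k hk hk1
  have hS : 0 < ∑ i ∈ range k, c i := sum_pos (fun i _ => hpos i) (nonempty_range_iff.2 (by omega))
  exact ((div_lt_iff₀ hS).1 hk).le

/-- For `(a_n) = (b_n)||(c_n)` with `limsup bₙ = b ∈ ℝ`, `c_n > 0`, `c_n → +∞`
and `cₙ / (c₁ + ⋯ + c₍ₙ₋₁₎) → 0`: every real `x > b` is accessible in average
by rearrangement of `(a_n)`. -/
theorem stmt17 (b c : ℕ → ℝ) (B : ℝ)
    (hb : limsup (fun n => ((b n : ℝ) : EReal)) atTop = (B : EReal))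
    (hpos : ∀ n, 0 < c n) (htop : Tendsto c atTop atTop)
    (hbal : Tendsto (fun n => c n / ∑ i ∈ Finset.range n, c i) atTop (𝓝 0)) :
    ∀ x : ℝ, B < x → (x : EReal) ∈ AAR (interleave b c) := by
  intro x hx
  have hb_le : ∀ᶠ n in atTop, b n ≤ (B + x) / 2 := by
    have : limsup (fun n => ((b n : ℝ) : EReal)) atTop < ((B + x) / 2 : ℝ) := by
      rw [hb]; exact_mod_cast (by linarith : B < (B + x) / 2)
    exact (eventually_lt_of_limsup_lt this).mono fun n hn => by exact_mod_cast hn.le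
  have hb_ge : ∃ᶠ n in atTop, -(|B| + 1) ≤ b n := by
    have : ((-(|B| + 1) : ℝ) : EReal) < limsup (fun n => ((b n : ℝ) : EReal)) atTop := by
      rw [hb]; exact_mod_cast (by linarith [neg_abs_le B] : -(|B| + 1) < B)
    exact (frequently_lt_of_lt_limsup (by isBoundedDefault) this).mono fun n hn => by
      exact_mod_cast hn.le
  obtain ⟨σ, hσ, hσ_lower, hσ_sum⟩ := exists_rearrangement_lower_bounds (by positivity) hb_ge
  obtain ⟨e, he, hlim⟩ := exists_bijective_tendsto_avgSeq_sumElim (β := b ∘ σ)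
    (x := x) (y := (B + x) / 2) (by linarith)
    (hσ.injective.nat_tendsto_atTop.eventually hb_le) hσ_lower hσ_sum htop
    (fun δ hδ => eventually_le_mul_sum_range hpos hbal hδ)
  refine mem_AAR_interleave ((hσ.sumMap Function.bijective_id).comp
    ((Equiv.sumComm ℕ ℕ).bijective.comp he)) ?_
  convert hlim using 2
  ext n
  simp only [Function.comp_apply]
  rcases e n with j | j <;> rfl
end
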